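/- arXiv:1503.03947 — 9 statements merged into one kernel-verified Lean document; each statement's English description precedes it below -/
import Mathlib

section
/- Two frames {φ_i}_{i=1}^N and {ψ_i}_{i=1}^N for a finite-dimensional Hilbert space H^M are woven (i.e., there are universal constants 0 < A ≤ B so that for every σ ⊆ [N], the family {φ_i}_{i∈σ} ∪ {ψ_i}_{i∈σ^c} is a frame with bounds A, B) if and only if for every σ ⊆ [N], the family {φ_i}_{i∈σ} ∪ {ψ_i}_{i∈σ^c} spans H^M. -/
/-!
A finite family always satisfies the upper frame inequality, with bound `∑ ‖vᵢ‖²` by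
Cauchy–Schwarz, so only the lower bound matters. A lower bound forces the analysis operator
`x ↦ (⟪x, vᵢ⟫)ᵢ` to be injective, i.e. the family to span; conversely an injective linear map on a
finite-dimensional space is bounded below. Since there are only finitely many weavings `σ ⊆ [N]`,
the smallest of their lower bounds is a uniform one.
-/

open scoped RealInnerProductSpace BigOperators Classical

open Submodule

section Frames

variable {H : Type*} [NormedAddCommGroup H] [InnerProductSpace ℝ H] {ι : Type*}

def analysisOperator (v : ι → H) : H →ₗ[ℝ] EuclideanSpace ℝ ι where
  toFun x := WithLp.toLp 2 fun i => ⟪x, v i⟫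
  map_add' x y := by ext i; simp [inner_add_left]
  map_smul' c x := by ext i; simp [real_inner_smul_left]

theorem ker_analysisOperator (v : ι → H) :
    LinearMap.ker (analysisOperator v) = (span ℝ (Set.range v))ᗮ := by
  ext x
  simp only [span_range_eq_iSup, ← iInf_orthogonal, mem_iInf,
    mem_orthogonal_singleton_iff_inner_left, LinearMap.mem_ker, analysisOperator,
    LinearMap.coe_mk, AddHom.coe_mk, WithLp.toLp_eq_zero,
    funext_iff, Pi.zero_apply]

variable [Fintype ι]

theorem norm_analysisOperator_sq (v : ι → H) (x : H) :
    ‖analysisOperator v x‖ ^ 2 = ∑ i, ⟪x, v i⟫ ^ 2 := by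
  simp [analysisOperator, EuclideanSpace.real_norm_sq_eq]

theorem sum_inner_sq_le_sum_norm_sq_mul (v : ι → H) (x : H) :
    ∑ i, ⟪x, v i⟫ ^ 2 ≤ (∑ i, ‖v i‖ ^ 2) * ‖x‖ ^ 2 := by
  rw [Finset.sum_mul]
  refine Finset.sum_le_sum fun i _ => ?_
  rw [← sq_abs, mul_comm, ← mul_pow]
  exact pow_le_pow_left₀ (abs_nonneg _) (abs_real_inner_le_norm x (v i)) 2

variable [FiniteDimensional ℝ H]

theorem span_range_eq_top_of_mul_norm_sq_le {v : ι → H} {A : ℝ} (hA : 0 < A)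
    (h : ∀ x, A * ‖x‖ ^ 2 ≤ ∑ i, ⟪x, v i⟫ ^ 2) : span ℝ (Set.range v) = ⊤ := by
  rw [← orthogonal_eq_bot_iff, ← ker_analysisOperator, LinearMap.ker_eq_bot']
  intro x hx
  have hle : A * ‖x‖ ^ 2 ≤ 0 := by simpa [← norm_analysisOperator_sq, hx] using h x
  simpa using nonpos_of_mul_nonpos_right hle hA

theorem exists_pos_mul_norm_sq_le_of_span_eq_top {v : ι → H}
    (hv : span ℝ (Set.range v) = ⊤) :
    ∃ A > 0, ∀ x, A * ‖x‖ ^ 2 ≤ ∑ i, ⟪x, v i⟫ ^ 2 := by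
  have hker : LinearMap.ker (analysisOperator v) = ⊥ := by
    rw [ker_analysisOperator, orthogonal_eq_bot_iff, hv]
  obtain ⟨K, -, hK⟩ := (analysisOperator v).exists_antilipschitzWith hker
  obtain ⟨c, hc, hbound⟩ := antilipschitzWith_iff_exists_mul_le_norm.mp ⟨K, hK⟩
  refine ⟨c ^ 2, by positivity, fun x => ?_⟩
  rw [← norm_analysisOperator_sq, ← mul_pow]
  exact pow_le_pow_left₀ (by positivity) (hbound x) 2

theorem exists_pos_forall_mul_norm_sq_le_of_span_eq_top {κ : Type*} [Finite κ] [Nonempty κ]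
    {v : κ → ι → H} (hv : ∀ k, span ℝ (Set.range (v k)) = ⊤) :
    ∃ A > 0, ∀ k x, A * ‖x‖ ^ 2 ≤ ∑ i, ⟪x, v k i⟫ ^ 2 := by
  choose A hA hlow using fun k => exists_pos_mul_norm_sq_le_of_span_eq_top (hv k)
  obtain ⟨k₀, hk₀⟩ := Finite.exists_min A
  exact ⟨A k₀, hA k₀, fun k x =>
    (mul_le_mul_of_nonneg_right (hk₀ k) (sq_nonneg _)).trans (hlow k x)⟩

end Frames

theorem stmt_1_general {H : Type*} [NormedAddCommGroup H] [InnerProductSpace ℝ H]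
    [FiniteDimensional ℝ H] {N : ℕ}
    (φ ψ : Fin N → H) :
    (∃ A B : ℝ, 0 < A ∧ A ≤ B ∧ ∀ σ : Set (Fin N), ∀ x : H,
        A * ‖x‖ ^ 2 ≤ (∑ i : Fin N, ⟪x, if i ∈ σ then φ i else ψ i⟫ ^ 2) ∧
        (∑ i : Fin N, ⟪x, if i ∈ σ then φ i else ψ i⟫ ^ 2) ≤ B * ‖x‖ ^ 2) ↔
      (∀ σ : Set (Fin N),
        Submodule.span ℝ (Set.range fun i : Fin N => if i ∈ σ then φ i else ψ i) = ⊤) := by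
  constructor
  · rintro ⟨A, B, hA, -, hbounds⟩ σ
    exact span_range_eq_top_of_mul_norm_sq_le hA fun x => (hbounds σ x).1
  · intro hspan
    obtain ⟨A, hA, hlow⟩ := exists_pos_forall_mul_norm_sq_le_of_span_eq_top hspan
    refine ⟨A, max A (∑ i, (‖φ i‖ ^ 2 + ‖ψ i‖ ^ 2)), hA, le_max_left _ _,
      fun σ x => ⟨hlow σ x, (sum_inner_sq_le_sum_norm_sq_mul _ x).trans ?_⟩⟩
    gcongr
    refine (Finset.sum_le_sum fun i _ => ?_).trans (le_max_right _ _)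
    split_ifs <;> simp

/-- Two frames for a finite-dimensional Hilbert space are woven if and only if
every weaving spans the space. -/
theorem stmt_1 {H : Type*} [NormedAddCommGroup H] [InnerProductSpace ℝ H]
    [FiniteDimensional ℝ H] {M N : ℕ} (hM : Module.finrank ℝ H = M)
    (φ ψ : Fin N → H)
    (hφ : ∃ A B : ℝ, 0 < A ∧ A ≤ B ∧ ∀ x : H,
      A * ‖x‖ ^ 2 ≤ (∑ i : Fin N, ⟪x, φ i⟫ ^ 2) ∧ (∑ i : Fin N, ⟪x, φ i⟫ ^ 2) ≤ B * ‖x‖ ^ 2)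
    (hψ : ∃ A B : ℝ, 0 < A ∧ A ≤ B ∧ ∀ x : H,
      A * ‖x‖ ^ 2 ≤ (∑ i : Fin N, ⟪x, ψ i⟫ ^ 2) ∧ (∑ i : Fin N, ⟪x, ψ i⟫ ^ 2) ≤ B * ‖x‖ ^ 2) :
    (∃ A B : ℝ, 0 < A ∧ A ≤ B ∧ ∀ σ : Set (Fin N), ∀ x : H,
        A * ‖x‖ ^ 2 ≤ (∑ i : Fin N, ⟪x, if i ∈ σ then φ i else ψ i⟫ ^ 2) ∧
        (∑ i : Fin N, ⟪x, if i ∈ σ then φ i else ψ i⟫ ^ 2) ≤ B * ‖x‖ ^ 2) ↔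
      (∀ σ : Set (Fin N),
        Submodule.span ℝ (Set.range fun i : Fin N => if i ∈ σ then φ i else ψ i) = ⊤) :=
  stmt_1_general φ ψ
end

section
/- Let Φ and Ψ be frames for a Hilbert space H with optimal upper frame bounds B₁ and B₂ respectively. If Φ and Ψ are woven, then the optimal universal upper weaving bound is strictly less than B₁ + B₂. -/
/-!
For a unit vector `x` and any `σ`, the weavings along `σ` and along `σᶜ` together use every
vector of `Φ` and of `Ψ` exactly once, so their frame sums at `x` add up to
`∑ ⟪x, φ i⟫² + ∑ ⟪x, ψ i⟫² ≤ B₁ + B₂`. The weaving along `σᶜ` contributes at least the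
universal lower weaving bound `A > 0`, hence every weaving sum is at most `B₁ + B₂ - A`.
-/

open scoped RealInnerProductSpace BigOperators Classical

theorem Summable.of_pos_le_tsum {ι : Type*} {f : ι → ℝ} {a : ℝ} (ha : 0 < a)
    (h : a ≤ ∑' i, f i) : Summable f := by
  by_contra hf
  rw [tsum_eq_zero_of_not_summable hf] at h
  linarith

theorem tsum_ite_add_tsum_ite_swap {α β : Type*} [UniformSpace α] [AddCommGroup α]
    [IsUniformAddGroup α] [CompleteSpace α] [T2Space α] {f g : β → α}
    (hf : Summable f) (hg : Summable g) (p : β → Prop) [DecidablePred p] :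
    (∑' i, if p i then f i else g i) + (∑' i, if p i then g i else f i) =
      ∑' i, f i + ∑' i, g i := by
  have summable_ite : ∀ {u v : β → α}, Summable u → Summable v →
      Summable fun i => if p i then u i else v i := by
    intro u v hu hv
    convert (hu.indicator {i | p i}).add (hv.indicator {i | p i}ᶜ) using 1
    ext i
    by_cases hi : p i <;> simp [hi]
  rw [← (summable_ite hf hg).tsum_add (summable_ite hg hf), ← hf.tsum_add hg]
  congr 1
  ext i
  by_cases hi : p i <;> simp [hi, add_comm]

theorem stmt_6_general {H : Type*} [NormedAddCommGroup H] [InnerProductSpace ℝ H]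
    {I : Type*} (φ ψ : I → H) (B₁ B₂ : ℝ)
    (hφ : ∃ A : ℝ, 0 < A ∧ A ≤ B₁ ∧ ∀ x : H,
      A * ‖x‖ ^ 2 ≤ (∑' i : I, ⟪x, φ i⟫ ^ 2) ∧ (∑' i : I, ⟪x, φ i⟫ ^ 2) ≤ B₁ * ‖x‖ ^ 2)
    (hψ : ∃ A : ℝ, 0 < A ∧ A ≤ B₂ ∧ ∀ x : H,
      A * ‖x‖ ^ 2 ≤ (∑' i : I, ⟪x, ψ i⟫ ^ 2) ∧ (∑' i : I, ⟪x, ψ i⟫ ^ 2) ≤ B₂ * ‖x‖ ^ 2)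
    (hwoven : ∃ A B : ℝ, 0 < A ∧ A ≤ B ∧ ∀ σ : Set I, ∀ x : H,
      A * ‖x‖ ^ 2 ≤ (∑' i : I, ⟪x, if i ∈ σ then φ i else ψ i⟫ ^ 2) ∧
      (∑' i : I, ⟪x, if i ∈ σ then φ i else ψ i⟫ ^ 2) ≤ B * ‖x‖ ^ 2) :
    sSup {r : ℝ | ∃ (σ : Set I) (x : H), ‖x‖ = 1 ∧
        r = ∑' i : I, ⟪x, if i ∈ σ then φ i else ψ i⟫ ^ 2} < B₁ + B₂ := by
  obtain ⟨A₁, hA₁, hA₁B₁, hφ⟩ := hφ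
  obtain ⟨A₂, hA₂, hA₂B₂, hψ⟩ := hψ
  obtain ⟨A, _, hA, -, hw⟩ := hwoven
  have weave_le : ∀ (σ : Set I) (x : H), ‖x‖ = 1 →
      ∑' i, ⟪x, if i ∈ σ then φ i else ψ i⟫ ^ 2 ≤ B₁ + B₂ - A := by
    intro σ x hx
    have unit : ‖x‖ ^ 2 = 1 := by rw [hx, one_pow]
    obtain ⟨φ_lower, φ_upper⟩ := hφ x
    obtain ⟨ψ_lower, ψ_upper⟩ := hψ x
    have compl_lower := (hw σᶜ x).1
    rw [unit, mul_one] at φ_lower φ_upper ψ_lower ψ_upper compl_lower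
    simp only [Set.mem_compl_iff, ite_not] at compl_lower
    have split := tsum_ite_add_tsum_ite_swap (Summable.of_pos_le_tsum hA₁ φ_lower)
      (Summable.of_pos_le_tsum hA₂ ψ_lower) (· ∈ σ)
    simp only [← apply_ite (fun v => ⟪x, v⟫ ^ 2)] at split
    linarith
  -- `max … 0` covers `H = 0`, where the set is empty and `sSup ∅ = 0`.
  refine (Real.sSup_le ?_ (le_max_right (B₁ + B₂ - A) 0)).trans_lt
    (max_lt (by linarith) (by linarith))
  rintro r ⟨σ, x, hx, rfl⟩
  exact (weave_le σ x hx).trans (le_max_left _ _)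

/-- If `Φ` and `Ψ` are woven frames with optimal upper frame bounds `B₁` and `B₂`,
then the optimal universal upper weaving bound is strictly less than `B₁ + B₂`. -/
theorem stmt_6 {H : Type*} [NormedAddCommGroup H] [InnerProductSpace ℝ H]
    {I : Type*} (φ ψ : I → H) (B₁ B₂ : ℝ)
    (hφ : ∃ A : ℝ, 0 < A ∧ A ≤ B₁ ∧ ∀ x : H,
      A * ‖x‖ ^ 2 ≤ (∑' i : I, ⟪x, φ i⟫ ^ 2) ∧ (∑' i : I, ⟪x, φ i⟫ ^ 2) ≤ B₁ * ‖x‖ ^ 2)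
    (hψ : ∃ A : ℝ, 0 < A ∧ A ≤ B₂ ∧ ∀ x : H,
      A * ‖x‖ ^ 2 ≤ (∑' i : I, ⟪x, ψ i⟫ ^ 2) ∧ (∑' i : I, ⟪x, ψ i⟫ ^ 2) ≤ B₂ * ‖x‖ ^ 2)
    (hB₁ : B₁ = sSup {r : ℝ | ∃ x : H, ‖x‖ = 1 ∧ r = ∑' i : I, ⟪x, φ i⟫ ^ 2})
    (hB₂ : B₂ = sSup {r : ℝ | ∃ x : H, ‖x‖ = 1 ∧ r = ∑' i : I, ⟪x, ψ i⟫ ^ 2})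
    (hwoven : ∃ A B : ℝ, 0 < A ∧ A ≤ B ∧ ∀ σ : Set I, ∀ x : H,
      A * ‖x‖ ^ 2 ≤ (∑' i : I, ⟪x, if i ∈ σ then φ i else ψ i⟫ ^ 2) ∧
      (∑' i : I, ⟪x, if i ∈ σ then φ i else ψ i⟫ ^ 2) ≤ B * ‖x‖ ^ 2) :
    sSup {r : ℝ | ∃ (σ : Set I) (x : H), ‖x‖ = 1 ∧
        r = ∑' i : I, ⟪x, if i ∈ σ then φ i else ψ i⟫ ^ 2} < B₁ + B₂ :=
  stmt_6_general φ ψ B₁ B₂ hφ hψ hwoven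
end

section
/- Suppose {φ_i}_{i=1}^∞ and {ψ_i}_{i=1}^∞ are Riesz bases for a Hilbert space H and there are uniform constants 0 < A ≤ B such that for every σ ⊆ ℕ, the family {φ_i}_{i∈σ} ∪ {ψ_i}_{i∈σ^c} is a Riesz sequence with Riesz bounds A and B. Then for every finite σ ⊆ ℕ, the family {φ_i}_{i∈σ} ∪ {ψ_i}_{i∈σ^c} is a Riesz basis for H (i.e., its closed span is all of H). -/
open scoped RealInnerProductSpace BigOperators Classical

/-!
The lower Riesz bound makes every weaving minimal: no vector lies in the closed span `M` of the
others. Passing from `σ` to `insert j σ` replaces `ψ j` by `φ j` and keeps the other vectors.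
Since `M` is closed, `M + ℝ ψ j` is closed, and it is dense, so it is all of `H`; as `φ j ∉ M`,
the Steinitz exchange gives `M + ℝ φ j = H`. Induction on the finite set `σ`, starting from `ψ`.
-/

section RieszLowerBound

variable {ι E : Type*} [NormedAddCommGroup E] [NormedSpace ℝ E] {v : ι → E} {A : ℝ}

theorem le_norm_sub_sq_of_mem_span_image_ne
    (hlow : ∀ c : ι →₀ ℝ, A * (∑ i ∈ c.support, (c i) ^ 2) ≤ ‖∑ i ∈ c.support, c i • v i‖ ^ 2)
    (j : ι) {y : E} (hy : y ∈ Submodule.span ℝ (v '' {i | i ≠ j})) :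
    A ≤ ‖v j - y‖ ^ 2 := by
  obtain ⟨l, hl, rfl⟩ := (Finsupp.mem_span_image_iff_linearCombination ℝ).mp hy
  have hlj : l j = 0 := Finsupp.notMem_support_iff.mp fun h => hl h rfl
  set c : ι →₀ ℝ := Finsupp.single j 1 - l
  have hcj : c j = 1 := by simp [c, hlj]
  have hsum : ∑ i ∈ c.support, c i • v i = v j - Finsupp.linearCombination ℝ v l := by
    change Finsupp.linearCombination ℝ v c = _
    rw [map_sub, Finsupp.linearCombination_single, one_smul]
  have hone : 1 ≤ ∑ i ∈ c.support, (c i) ^ 2 := by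
    calc (1 : ℝ) = (c j) ^ 2 := by rw [hcj, one_pow]
      _ ≤ ∑ i ∈ c.support, (c i) ^ 2 :=
        Finset.single_le_sum (fun i _ => sq_nonneg (c i)) (by simp [hcj])
  rcases le_total A 0 with hA | hA
  · exact hA.trans (sq_nonneg _)
  calc A ≤ A * ∑ i ∈ c.support, (c i) ^ 2 := le_mul_of_one_le_right hA hone
    _ ≤ _ := hsum ▸ hlow c

theorem notMem_closure_span_image_ne (hA : 0 < A)
    (hlow : ∀ c : ι →₀ ℝ, A * (∑ i ∈ c.support, (c i) ^ 2) ≤ ‖∑ i ∈ c.support, c i • v i‖ ^ 2)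
    (j : ι) : v j ∉ (Submodule.span ℝ (v '' {i | i ≠ j})).topologicalClosure := by
  intro hj
  have hclosed : IsClosed {y : E | A ≤ ‖v j - y‖ ^ 2} :=
    isClosed_le continuous_const ((continuous_const.sub continuous_id).norm.pow 2)
  have hsub : closure (Submodule.span ℝ (v '' {i | i ≠ j}) : Set E) ⊆ {y | A ≤ ‖v j - y‖ ^ 2} :=
    closure_minimal (fun y hy => le_norm_sub_sq_of_mem_span_image_ne hlow j hy) hclosed
  have := hsub hj
  simp only [Set.mem_ofPred_eq, sub_self, norm_zero] at this
  linarith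

end RieszLowerBound

section Exchange

open Submodule

variable {𝕜 E ι : Type*} [NontriviallyNormedField 𝕜] [CompleteSpace 𝕜] [AddCommGroup E]
  [Module 𝕜 E] [TopologicalSpace E] [IsTopologicalAddGroup E] [ContinuousSMul 𝕜 E]

theorem Submodule.sup_span_singleton_eq_top_of_dense {M : Submodule 𝕜 E}
    (hM : IsClosed (M : Set E)) {x y : E} (hy : Dense ((M ⊔ span 𝕜 {y} : Submodule 𝕜 E) : Set E))
    (hx : x ∉ M) : M ⊔ span 𝕜 {x} = ⊤ := by
  have hytop : M ⊔ span 𝕜 {y} = ⊤ := by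
    have hclosed := isClosed_sup_finiteDimensional M (span 𝕜 {y}) hM
    exact eq_top_iff'.2 fun z => hclosed.closure_subset (hy z)
  have hins (z : E) : span 𝕜 (insert z (M : Set E)) = M ⊔ span 𝕜 {z} := by
    rw [span_insert, span_eq, sup_comm]
  have hyx : y ∈ M ⊔ span 𝕜 {x} := by
    rw [← hins] at hytop ⊢
    exact mem_span_insert_exchange (hytop ▸ mem_top) (by rwa [span_eq])
  exact eq_top_iff.2 (hytop ▸ sup_le le_sup_left ((span_singleton_le_iff_mem _ _).2 hyx))

theorem dense_span_range_of_exchange {u v : ι → E} {j : ι} (huv : ∀ i ≠ j, u i = v i)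
    (hv : Dense (Submodule.span 𝕜 (Set.range v) : Set E))
    (hu : u j ∉ (Submodule.span 𝕜 (u '' {i | i ≠ j})).topologicalClosure) :
    Dense (Submodule.span 𝕜 (Set.range u) : Set E) := by
  set M := (span 𝕜 (u '' {i | i ≠ j})).topologicalClosure
  have hv_le : span 𝕜 (Set.range v) ≤ M ⊔ span 𝕜 {v j} := by
    rw [span_le]
    rintro _ ⟨i, rfl⟩
    rcases eq_or_ne i j with rfl | hij
    · exact mem_sup_right (mem_span_singleton_self _)
    · exact mem_sup_left (huv i hij ▸ le_topologicalClosure _ (subset_span ⟨i, hij, rfl⟩))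
  have htop : M ⊔ span 𝕜 {u j} = ⊤ :=
    sup_span_singleton_eq_top_of_dense (isClosed_topologicalClosure _) (hv.mono hv_le) hu
  rw [dense_iff_topologicalClosure_eq_top, eq_top_iff, ← htop]
  exact sup_le (topologicalClosure_mono (span_mono (Set.image_subset_range _ _)))
    ((span_singleton_le_iff_mem _ _).2 (le_topologicalClosure _ (subset_span ⟨j, rfl⟩)))

end Exchange

theorem stmt_7_general {H : Type*} [NormedAddCommGroup H] [InnerProductSpace ℝ H]
    (φ ψ : ℕ → H) (A B : ℝ) (hA : 0 < A)
    (hψdense : Dense (Submodule.span ℝ (Set.range ψ) : Set H))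
    (hweave : ∀ σ : Set ℕ, ∀ c : ℕ →₀ ℝ,
      A * (∑ i ∈ c.support, (c i) ^ 2) ≤
        ‖∑ i ∈ c.support, c i • (if i ∈ σ then φ i else ψ i)‖ ^ 2 ∧
      ‖∑ i ∈ c.support, c i • (if i ∈ σ then φ i else ψ i)‖ ^ 2 ≤
        B * (∑ i ∈ c.support, (c i) ^ 2)) :
    ∀ σ : Set ℕ, σ.Finite →
      Dense (Submodule.span ℝ
        (Set.range fun i : ℕ => if i ∈ σ then φ i else ψ i) : Set H) := by
  intro σ hσ
  induction σ, hσ using Set.Finite.induction_on with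
  | empty => simpa using hψdense
  | @insert j σ _ _ ih =>
    refine dense_span_range_of_exchange (fun i hi => ?_) ih
      (notMem_closure_span_image_ne hA (fun c => (hweave (insert j σ) c).1) j)
    simp only [Set.mem_insert_iff, hi, false_or]

/-- If `φ` and `ψ` are Riesz bases and every weaving is a Riesz sequence with
uniform bounds `A, B`, then for every finite `σ` the weaving is a Riesz basis,
i.e. its closed span is all of `H`. -/
theorem stmt_7 {H : Type*} [NormedAddCommGroup H] [InnerProductSpace ℝ H]
    (φ ψ : ℕ → H) (A B : ℝ) (hA : 0 < A) (hAB : A ≤ B)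
    (hφRiesz : ∃ A' B' : ℝ, 0 < A' ∧ A' ≤ B' ∧ ∀ c : ℕ →₀ ℝ,
      A' * (∑ i ∈ c.support, (c i) ^ 2) ≤ ‖∑ i ∈ c.support, c i • φ i‖ ^ 2 ∧
      ‖∑ i ∈ c.support, c i • φ i‖ ^ 2 ≤ B' * (∑ i ∈ c.support, (c i) ^ 2))
    (hφdense : Dense (Submodule.span ℝ (Set.range φ) : Set H))
    (hψRiesz : ∃ A' B' : ℝ, 0 < A' ∧ A' ≤ B' ∧ ∀ c : ℕ →₀ ℝ,
      A' * (∑ i ∈ c.support, (c i) ^ 2) ≤ ‖∑ i ∈ c.support, c i • ψ i‖ ^ 2 ∧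
      ‖∑ i ∈ c.support, c i • ψ i‖ ^ 2 ≤ B' * (∑ i ∈ c.support, (c i) ^ 2))
    (hψdense : Dense (Submodule.span ℝ (Set.range ψ) : Set H))
    (hweave : ∀ σ : Set ℕ, ∀ c : ℕ →₀ ℝ,
      A * (∑ i ∈ c.support, (c i) ^ 2) ≤
        ‖∑ i ∈ c.support, c i • (if i ∈ σ then φ i else ψ i)‖ ^ 2 ∧
      ‖∑ i ∈ c.support, c i • (if i ∈ σ then φ i else ψ i)‖ ^ 2 ≤
        B * (∑ i ∈ c.support, (c i) ^ 2)) :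
    ∀ σ : Set ℕ, σ.Finite →
      Dense (Submodule.span ℝ
        (Set.range fun i : ℕ => if i ∈ σ then φ i else ψ i) : Set H) :=
  stmt_7_general φ ψ A B hA hψdense hweave
end

section
/- Suppose {φ_i}_{i=1}^∞ and {ψ_i}_{i=1}^∞ are Riesz bases for a Hilbert space H such that there exist uniform constants 0 < A ≤ B with the property that for every σ ⊆ ℕ, the family {φ_i}_{i∈σ} ∪ {ψ_i}_{i∈σ^c} is a Riesz sequence with Riesz bounds A and B. Then for every σ ⊆ ℕ (possibly infinite), the family {φ_i}_{i∈σ} ∪ {ψ_i}_{i∈σ^c} is a Riesz basis for H. -/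
open scoped RealInnerProductSpace BigOperators Classical

/-!
Exchanging one vector of a complete family for a vector outside the closed span of the others
keeps the family complete, and a lower Riesz bound keeps each vector outside the closed span of
the rest; by induction every weave with finite `σ` is complete. For arbitrary `σ`, let `x` be
orthogonal to the weave. As `ψ` is a Bessel sequence, `∑ ⟪x, ψ i⟫ ^ 2` converges, so off some
finite `s` its tail is below `ε ^ 2`. Approximate `x` within `ε` by `v` in the span of the
(complete) weave for `σ ∩ s`: only the `ψ i` with `i ∉ s` contribute to `⟪x, v⟫`, and
Cauchy–Schwarz together with the lower bound `A` gives `√A ⟪x, v⟫ ≤ ε ‖v‖`. Letting `ε → 0`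
forces `x = 0`.
-/

section Weaving

open Set Submodule

variable {ι E F : Type*}

noncomputable def weave (σ : Set ι) (φ ψ : ι → E) (i : ι) : E := if i ∈ σ then φ i else ψ i

theorem comp_weave (e : E → F) (σ : Set ι) (φ ψ : ι → E) :
    e ∘ weave σ φ ψ = weave σ (e ∘ φ) (e ∘ ψ) :=
  funext fun _ => apply_ite e _ _ _

section NormedSpace

variable [NormedAddCommGroup E] [NormedSpace ℝ E] [NormedAddCommGroup F] [NormedSpace ℝ F]

def IsLowerRieszBound (A : ℝ) (g : ι → E) : Prop :=
  ∀ c : ι →₀ ℝ, A * ∑ i ∈ c.support, c i ^ 2 ≤ ‖∑ i ∈ c.support, c i • g i‖ ^ 2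

def IsUpperRieszBound (B : ℝ) (g : ι → E) : Prop :=
  ∀ c : ι →₀ ℝ, ‖∑ i ∈ c.support, c i • g i‖ ^ 2 ≤ B * ∑ i ∈ c.support, c i ^ 2

theorem dense_span_range_exchange {f g : ι → E} {j : ι} (hfg : ∀ i ≠ j, g i = f i)
    (hf : Dense (span ℝ (range f) : Set E))
    (hg : g j ∉ (span ℝ (g '' {j}ᶜ)).topologicalClosure) :
    Dense (span ℝ (range g) : Set E) := by
  set M := (span ℝ (g '' {j}ᶜ)).topologicalClosure
  set K := (span ℝ (range g)).topologicalClosure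
  have hMK : M ≤ K := topologicalClosure_mono (span_mono (image_subset_range _ _))
  -- `M ⊔ ℝ ∙ f j` is closed, being a closed subspace plus a line, and contains every `f i`.
  have hsup : M ⊔ ℝ ∙ f j = ⊤ := by
    refine top_unique ?_
    rw [← dense_iff_topologicalClosure_eq_top.mp hf]
    refine topologicalClosure_minimal _ (span_le.mpr ?_)
      (isClosed_sup_finiteDimensional _ _ (isClosed_topologicalClosure _))
    rintro _ ⟨i, rfl⟩
    by_cases hi : i = j
    · exact hi ▸ mem_sup_right (mem_span_singleton_self _)
    · exact mem_sup_left (hfg i hi ▸ le_topologicalClosure _ (subset_span (mem_image_of_mem g hi)))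
  obtain ⟨m, hm, _, hz, hgj⟩ := mem_sup.mp (hsup ▸ mem_top : g j ∈ M ⊔ ℝ ∙ f j)
  obtain ⟨t, rfl⟩ := mem_span_singleton.mp hz
  have ht : t ≠ 0 := by
    rintro rfl
    rw [zero_smul, add_zero] at hgj
    exact hg (hgj ▸ hm)
  have hfj : f j ∈ K := by
    rw [show f j = t⁻¹ • (g j - m) by rw [← hgj, add_sub_cancel_left, inv_smul_smul₀ ht]]
    exact K.smul_mem _
      (K.sub_mem (le_topologicalClosure _ (subset_span (mem_range_self j))) (hMK hm))
  rw [dense_iff_topologicalClosure_eq_top, eq_top_iff, ← hsup]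
  exact sup_le hMK ((span_singleton_le_iff_mem _ _).mpr hfj)

namespace IsLowerRieszBound

variable {A : ℝ} {g : ι → E}

theorem le_norm_sub_sq (hg : IsLowerRieszBound A g) (hA : 0 ≤ A) {j : ι} {u : E}
    (hu : u ∈ span ℝ (g '' {j}ᶜ)) : A ≤ ‖g j - u‖ ^ 2 := by
  obtain ⟨l, hl, rfl⟩ := (Finsupp.mem_span_image_iff_linearCombination ℝ).mp hu
  have hlj : l j = 0 := (Finsupp.mem_supported' ℝ l).mp hl j (by simp)
  set c := Finsupp.single j 1 - l
  have hcj : c j = 1 := by simp [c, hlj]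
  have hc : ∑ i ∈ c.support, c i • g i = g j - Finsupp.linearCombination ℝ g l := by
    change Finsupp.linearCombination ℝ g c = _
    simp [c, Finsupp.linearCombination_single]
  calc A = A * c j ^ 2 := by rw [hcj, one_pow, mul_one]
    _ ≤ A * ∑ i ∈ c.support, c i ^ 2 :=
      mul_le_mul_of_nonneg_left
        (Finset.single_le_sum (fun i _ => sq_nonneg (c i)) (by simp [hcj])) hA
    _ ≤ _ := hc ▸ hg c

theorem notMem_topologicalClosure_span_image_compl (hg : IsLowerRieszBound A g) (hA : 0 < A)
    (j : ι) : g j ∉ (span ℝ (g '' {j}ᶜ)).topologicalClosure := by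
  intro hj
  have hclosed : IsClosed {u : E | A ≤ ‖g j - u‖ ^ 2} :=
    isClosed_le continuous_const (by fun_prop : Continuous fun u : E => ‖g j - u‖ ^ 2)
  have h : A ≤ ‖g j - g j‖ ^ 2 := closure_minimal (fun u hu => hg.le_norm_sub_sq hA.le hu) hclosed
    (by rwa [← topologicalClosure_coe])
  rw [sub_self, norm_zero, sq, mul_zero] at h
  exact h.not_gt hA

theorem comp_linearIsometry (hg : IsLowerRieszBound A g) (e : E →ₗᵢ[ℝ] F) :
    IsLowerRieszBound A (e ∘ g) := fun c => by
  simpa only [Function.comp_apply, ← e.map_smul, ← map_sum, e.norm_map] using hg c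

end IsLowerRieszBound

namespace IsUpperRieszBound

variable {B : ℝ} {g : ι → E}

theorem norm_sum_sq_le (hg : IsUpperRieszBound B g) (s : Finset ι) (a : ι → ℝ) :
    ‖∑ i ∈ s, a i • g i‖ ^ 2 ≤ B * ∑ i ∈ s, a i ^ 2 := by
  set c := Finsupp.indicator s fun i _ => a i
  have hc : ∀ i ∈ s, c i = a i := fun i hi => Finsupp.indicator_of_mem hi _
  have hsupp : c.support ⊆ s := Finsupp.support_indicator_subset _ _
  have hvec : ∑ i ∈ c.support, c i • g i = ∑ i ∈ s, a i • g i :=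
    (c.sum_of_support_subset hsupp (fun i r => r • g i) fun _ _ => zero_smul ℝ _).trans
      (Finset.sum_congr rfl fun i hi => by rw [hc i hi])
  have hsq : ∑ i ∈ c.support, c i ^ 2 = ∑ i ∈ s, a i ^ 2 :=
    (c.sum_of_support_subset hsupp (fun _ r => r ^ 2) fun _ _ => zero_pow two_ne_zero).trans
      (Finset.sum_congr rfl fun i hi => by rw [hc i hi])
  exact hvec ▸ hsq ▸ hg c

theorem comp_linearIsometry (hg : IsUpperRieszBound B g) (e : E →ₗᵢ[ℝ] F) :
    IsUpperRieszBound B (e ∘ g) := fun c => by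
  simpa only [Function.comp_apply, ← e.map_smul, ← map_sum, e.norm_map] using hg c

end IsUpperRieszBound

theorem dense_span_range_comp_iff {f : E →ₗ[ℝ] F} (hf : IsDenseInducing f) {g : ι → E} :
    Dense (span ℝ (range (f ∘ g)) : Set F) ↔ Dense (span ℝ (range g) : Set E) := by
  rw [range_comp, ← map_span, map_coe, hf.dense_image]

theorem dense_span_range_weave_of_finite {φ ψ : ι → E} {A : ℝ} (hA : 0 < A)
    (hweave : ∀ σ, IsLowerRieszBound A (weave σ φ ψ)) (hψ : Dense (span ℝ (range ψ) : Set E))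
    {τ : Set ι} (hτ : τ.Finite) : Dense (span ℝ (range (weave τ φ ψ)) : Set E) := by
  induction τ, hτ using Set.Finite.induction_on with
  | empty => rwa [show weave ∅ φ ψ = ψ from funext fun i => if_neg (notMem_empty i)]
  | @insert a τ _ _ ih =>
    refine dense_span_range_exchange (j := a) (fun i hi => ?_) ih
      ((hweave _).notMem_topologicalClosure_span_image_compl hA a)
    simp [weave, hi]

end NormedSpace

section InnerProductSpace

variable [NormedAddCommGroup E] [InnerProductSpace ℝ E]

namespace IsUpperRieszBound

variable {B : ℝ} {g : ι → E}

theorem sum_inner_sq_le (hg : IsUpperRieszBound B g) (hB : 0 ≤ B) (x : E) (s : Finset ι) :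
    ∑ i ∈ s, ⟪x, g i⟫ ^ 2 ≤ B * ‖x‖ ^ 2 := by
  set v := ∑ i ∈ s, ⟪x, g i⟫ • g i
  set S := ∑ i ∈ s, ⟪x, g i⟫ ^ 2
  have hS : 0 ≤ S := Finset.sum_nonneg fun i _ => sq_nonneg _
  have hxv : ⟪x, v⟫ = S := by
    simp only [v, S, inner_sum, real_inner_smul_right, sq]
  have hv : ‖v‖ ^ 2 ≤ B * S := hg.norm_sum_sq_le s _
  have hSxv : S ≤ ‖x‖ * ‖v‖ := hxv ▸ real_inner_le_norm x v
  by_contra! hlt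
  have hSpos : 0 < S := lt_of_le_of_lt (by positivity) hlt
  -- `S ^ 2 ≤ ‖x‖ ^ 2 ‖v‖ ^ 2 ≤ B ‖x‖ ^ 2 S < S ^ 2`
  nlinarith [mul_le_mul hSxv hSxv hS (by positivity),
    mul_le_mul_of_nonneg_left hv (sq_nonneg ‖x‖), mul_lt_mul_of_pos_left hlt hSpos]

theorem summable_inner_sq (hg : IsUpperRieszBound B g) (hB : 0 ≤ B) (x : E) :
    Summable fun i => ⟪x, g i⟫ ^ 2 :=
  summable_of_sum_le (fun _ => sq_nonneg _) (hg.sum_inner_sq_le hB x)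

end IsUpperRieszBound

theorem eq_zero_of_forall_exists_norm_sub_lt_inner_le {x : E} {C : ℝ} (hC : 0 < C)
    (h : ∀ ε > 0, ∃ v : E, ‖x - v‖ < ε ∧ C * ⟪x, v⟫ ≤ ε * ‖v‖) : x = 0 := by
  have key : ∀ ε > 0, C * ‖x‖ ^ 2 ≤ ε * (C * ‖x‖ + ‖x‖ + ε) := fun ε hε => by
    obtain ⟨v, hxv, hv⟩ := h ε hε
    have hsplit : ‖x‖ ^ 2 = ⟪x, v⟫ + ⟪x, x - v⟫ := by
      rw [← inner_add_right, add_sub_cancel, real_inner_self_eq_norm_sq]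
    have h1 : ⟪x, x - v⟫ ≤ ‖x‖ * ε :=
      (real_inner_le_norm x _).trans (mul_le_mul_of_nonneg_left hxv.le (norm_nonneg x))
    have h2 : ‖v‖ ≤ ‖x‖ + ε := by
      linarith [norm_le_norm_add_norm_sub' v x, norm_sub_rev x v]
    nlinarith [mul_le_mul_of_nonneg_left h1 hC.le, mul_le_mul_of_nonneg_left h2 hε.le]
  have hlim : Filter.Tendsto (fun ε : ℝ => ε * (C * ‖x‖ + ‖x‖ + ε)) (nhdsWithin 0 (Ioi 0))
      (nhds 0) := by
    have hcont : Continuous fun ε : ℝ => ε * (C * ‖x‖ + ‖x‖ + ε) := by fun_prop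
    simpa using (hcont.tendsto 0).mono_left nhdsWithin_le_nhds
  have hx : C * ‖x‖ ^ 2 ≤ 0 := ge_of_tendsto hlim (eventually_nhdsWithin_of_forall key)
  have : ‖x‖ ^ 2 = 0 := le_antisymm (nonpos_of_mul_nonpos_right hx hC) (sq_nonneg _)
  exact norm_eq_zero.mp (pow_eq_zero_iff two_ne_zero |>.mp this)

theorem exists_norm_sub_lt_inner_le_of_inner_weave_eq_zero {φ ψ : ι → E} {A B : ℝ} (hA : 0 < A)
    (hB : 0 ≤ B) (hweave : ∀ σ, IsLowerRieszBound A (weave σ φ ψ)) (hψ : IsUpperRieszBound B ψ)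
    (hψd : Dense (span ℝ (range ψ) : Set E)) {σ : Set ι} {x : E}
    (hx : ∀ i, ⟪x, weave σ φ ψ i⟫ = 0) {ε : ℝ} (hε : 0 < ε) :
    ∃ v : E, ‖x - v‖ < ε ∧ √A * ⟪x, v⟫ ≤ ε * ‖v‖ := by
  obtain ⟨s, hs⟩ := summable_iff_vanishing.mp (hψ.summable_inner_sq hB x) (Iio (ε ^ 2))
    (Iio_mem_nhds (by positivity))
  -- Approximate `x` by the finite weave that agrees with `weave σ` on `s` and with `ψ` off `s`.
  set τ := σ ∩ s
  have hτ : τ.Finite := s.finite_toSet.inter_of_right σ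
  obtain ⟨v, hv, hxv⟩ :=
    Metric.mem_closure_iff.mp (dense_span_range_weave_of_finite hA hweave hψd hτ x) ε hε
  obtain ⟨c, hc⟩ := Finsupp.mem_span_range_iff_exists_finsupp.mp hv
  rw [Finsupp.sum] at hc
  refine ⟨v, by rwa [← dist_eq_norm], ?_⟩
  set T := c.support.filter (· ∉ s)
  have hinner : ⟪x, v⟫ = ∑ i ∈ T, c i * ⟪x, ψ i⟫ := by
    rw [← hc, inner_sum, Finset.sum_filter]
    refine Finset.sum_congr rfl fun i _ => ?_
    by_cases hi : i ∈ s
    · have : weave τ φ ψ i = weave σ φ ψ i := by simp [weave, τ, hi]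
      simp [hi, this, real_inner_smul_right, hx i]
    · have : weave τ φ ψ i = ψ i := by simp [weave, τ, hi]
      simp [hi, this, real_inner_smul_right]
  have htail : √(∑ i ∈ T, ⟪x, ψ i⟫ ^ 2) ≤ ε := by
    rw [← Real.sqrt_sq hε.le]
    have hT : Disjoint T s := Finset.disjoint_left.mpr fun _ hi => (Finset.mem_filter.mp hi).2
    exact Real.sqrt_le_sqrt (hs T hT).le
  have hcoef : √A * √(∑ i ∈ T, c i ^ 2) ≤ ‖v‖ := by
    rw [← Real.sqrt_mul hA.le, ← Real.sqrt_sq (norm_nonneg v)]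
    refine Real.sqrt_le_sqrt (le_trans ?_ (hc ▸ hweave τ c))
    exact mul_le_mul_of_nonneg_left (Finset.sum_le_sum_of_subset_of_nonneg
      (Finset.filter_subset _ _) fun i _ _ => sq_nonneg (c i)) hA.le
  calc √A * ⟪x, v⟫
      ≤ √A * (√(∑ i ∈ T, c i ^ 2) * √(∑ i ∈ T, ⟪x, ψ i⟫ ^ 2)) := by
        rw [hinner]
        exact mul_le_mul_of_nonneg_left (Real.sum_mul_le_sqrt_mul_sqrt _ _ _) (by positivity)
    _ ≤ ‖v‖ * ε := by
        rw [← mul_assoc]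
        exact mul_le_mul hcoef htail (by positivity) (norm_nonneg v)
    _ = ε * ‖v‖ := mul_comm _ _

theorem dense_span_range_weave [CompleteSpace E] {φ ψ : ι → E} {A B : ℝ} (hA : 0 < A)
    (hB : 0 ≤ B) (hweave : ∀ σ, IsLowerRieszBound A (weave σ φ ψ)) (hψ : IsUpperRieszBound B ψ)
    (hψd : Dense (span ℝ (range ψ) : Set E)) (σ : Set ι) :
    Dense (span ℝ (range (weave σ φ ψ)) : Set E) := by
  rw [dense_iff_topologicalClosure_eq_top, topologicalClosure_eq_top_iff, eq_bot_iff]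
  intro x hx
  have hxσ : ∀ i, ⟪x, weave σ φ ψ i⟫ = 0 := fun i => by
    rw [real_inner_comm]
    exact inner_right_of_mem_orthogonal (subset_span (mem_range_self i)) hx
  exact eq_zero_of_forall_exists_norm_sub_lt_inner_le (Real.sqrt_pos.mpr hA) fun ε hε =>
    exists_norm_sub_lt_inner_le_of_inner_weave_eq_zero hA hB hweave hψ hψd hxσ hε

end InnerProductSpace

end Weaving

theorem stmt_8_general {H : Type*} [NormedAddCommGroup H] [InnerProductSpace ℝ H]
    (φ ψ : ℕ → H) (A B : ℝ) (hA : 0 < A)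
    (hψRiesz : ∃ A' B' : ℝ, 0 < A' ∧ A' ≤ B' ∧ ∀ c : ℕ →₀ ℝ,
      A' * (∑ i ∈ c.support, (c i) ^ 2) ≤ ‖∑ i ∈ c.support, c i • ψ i‖ ^ 2 ∧
      ‖∑ i ∈ c.support, c i • ψ i‖ ^ 2 ≤ B' * (∑ i ∈ c.support, (c i) ^ 2))
    (hψdense : Dense (Submodule.span ℝ (Set.range ψ) : Set H))
    (hweave : ∀ σ : Set ℕ, ∀ c : ℕ →₀ ℝ,
      A * (∑ i ∈ c.support, (c i) ^ 2) ≤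
        ‖∑ i ∈ c.support, c i • (if i ∈ σ then φ i else ψ i)‖ ^ 2 ∧
      ‖∑ i ∈ c.support, c i • (if i ∈ σ then φ i else ψ i)‖ ^ 2 ≤
        B * (∑ i ∈ c.support, (c i) ^ 2)) :
    ∀ σ : Set ℕ,
      (∀ c : ℕ →₀ ℝ,
        A * (∑ i ∈ c.support, (c i) ^ 2) ≤
          ‖∑ i ∈ c.support, c i • (if i ∈ σ then φ i else ψ i)‖ ^ 2 ∧
        ‖∑ i ∈ c.support, c i • (if i ∈ σ then φ i else ψ i)‖ ^ 2 ≤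
          B * (∑ i ∈ c.support, (c i) ^ 2)) ∧
      Dense (Submodule.span ℝ
        (Set.range fun i : ℕ => if i ∈ σ then φ i else ψ i) : Set H) := by
  intro σ
  refine ⟨hweave σ, ?_⟩
  obtain ⟨Aψ, Bψ, hAψ, hABψ, hψ⟩ := hψRiesz
  -- Pass to the completion, where density follows from triviality of the orthogonal complement.
  let e : H →ₗᵢ[ℝ] UniformSpace.Completion H := UniformSpace.Completion.toComplₗᵢ
  have he : IsDenseInducing e.toLinearMap := by
    simpa [e, UniformSpace.Completion.coe_toComplₗᵢ] using
      UniformSpace.Completion.isDenseInducing_coe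
  have hweaveH : ∀ τ, IsLowerRieszBound A (weave τ φ ψ) := fun τ c => (hweave τ c).1
  have hweaveC : ∀ τ, IsLowerRieszBound A (weave τ (e ∘ φ) (e ∘ ψ)) := fun τ =>
    comp_weave e τ φ ψ ▸ (hweaveH τ).comp_linearIsometry e
  have hψC : IsUpperRieszBound Bψ (e ∘ ψ) :=
    IsUpperRieszBound.comp_linearIsometry (fun c => (hψ c).2) e
  have hdense := dense_span_range_weave hA (hAψ.le.trans hABψ) hweaveC hψC
    ((dense_span_range_comp_iff he).mpr hψdense) σ
  rw [← comp_weave] at hdense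
  exact (dense_span_range_comp_iff he).mp hdense

/-- If `φ` and `ψ` are Riesz bases and every weaving is a Riesz sequence with
uniform bounds `A, B`, then every weaving (for arbitrary `σ ⊆ ℕ`) is in fact a
Riesz basis for `H`. -/
theorem stmt_8 {H : Type*} [NormedAddCommGroup H] [InnerProductSpace ℝ H]
    (φ ψ : ℕ → H) (A B : ℝ) (hA : 0 < A) (hAB : A ≤ B)
    (hφRiesz : ∃ A' B' : ℝ, 0 < A' ∧ A' ≤ B' ∧ ∀ c : ℕ →₀ ℝ,
      A' * (∑ i ∈ c.support, (c i) ^ 2) ≤ ‖∑ i ∈ c.support, c i • φ i‖ ^ 2 ∧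
      ‖∑ i ∈ c.support, c i • φ i‖ ^ 2 ≤ B' * (∑ i ∈ c.support, (c i) ^ 2))
    (hφdense : Dense (Submodule.span ℝ (Set.range φ) : Set H))
    (hψRiesz : ∃ A' B' : ℝ, 0 < A' ∧ A' ≤ B' ∧ ∀ c : ℕ →₀ ℝ,
      A' * (∑ i ∈ c.support, (c i) ^ 2) ≤ ‖∑ i ∈ c.support, c i • ψ i‖ ^ 2 ∧
      ‖∑ i ∈ c.support, c i • ψ i‖ ^ 2 ≤ B' * (∑ i ∈ c.support, (c i) ^ 2))
    (hψdense : Dense (Submodule.span ℝ (Set.range ψ) : Set H))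
    (hweave : ∀ σ : Set ℕ, ∀ c : ℕ →₀ ℝ,
      A * (∑ i ∈ c.support, (c i) ^ 2) ≤
        ‖∑ i ∈ c.support, c i • (if i ∈ σ then φ i else ψ i)‖ ^ 2 ∧
      ‖∑ i ∈ c.support, c i • (if i ∈ σ then φ i else ψ i)‖ ^ 2 ≤
        B * (∑ i ∈ c.support, (c i) ^ 2)) :
    ∀ σ : Set ℕ,
      (∀ c : ℕ →₀ ℝ,
        A * (∑ i ∈ c.support, (c i) ^ 2) ≤
          ‖∑ i ∈ c.support, c i • (if i ∈ σ then φ i else ψ i)‖ ^ 2 ∧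
        ‖∑ i ∈ c.support, c i • (if i ∈ σ then φ i else ψ i)‖ ^ 2 ≤
          B * (∑ i ∈ c.support, (c i) ^ 2)) ∧
      Dense (Submodule.span ℝ
        (Set.range fun i : ℕ => if i ∈ σ then φ i else ψ i) : Set H) :=
  stmt_8_general φ ψ A B hA hψRiesz hψdense hweave
end

section
/- Quantitative version of Lemma (i)⇒(ii): If {φ_i}_{i∈I} ∪ {ψ_j}_{j∈J} is a Riesz sequence with lower bound A and upper bound B (where {φ_i} and {ψ_j} are Riesz sequences), then for any x in the closed span of {φ_i} and y in the closed span of {ψ_j} with ‖x‖ = 1 or ‖y‖ = 1, one has ‖x − y‖² ≥ A/B. -/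
/-!
Write `x = ∑ aᵢ φᵢ` and `y = ∑ bⱼ ψⱼ` with finitely many nonzero coefficients. The lower
Riesz bound of the union, applied to the coefficient sequence `(a, -b)`, gives
`A (‖a‖² + ‖b‖²) ≤ ‖x - y‖²`, while its upper bound, applied to `(a, 0)` and `(0, b)`, gives
`‖x‖² ≤ B ‖a‖²` and `‖y‖² ≤ B ‖b‖²`. Hence `A (‖x‖² + ‖y‖²) ≤ B ‖x - y‖²` on the spans, and by
continuity on their closures; `‖x‖ = 1` or `‖y‖ = 1` makes the left side at least `A`.
-/

open Finsupp Set Submodule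

theorem Finsupp.linearCombination_sumElim {R M I J : Type*} [Semiring R] [AddCommMonoid M]
    [Module R M] (φ : I → M) (ψ : J → M) (a : I →₀ R) (b : J →₀ R) :
    linearCombination R (Sum.elim φ ψ) (sumElim a b) =
      linearCombination R φ a + linearCombination R ψ b := by
  simp only [linearCombination_apply, sum_sumElim, Function.comp_def, Sum.elim_inl,
    Sum.elim_inr]

section RieszUnion

variable {H : Type*} [NormedAddCommGroup H] [NormedSpace ℝ H] {I J : Type*}
  {φ : I → H} {ψ : J → H} {A B : ℝ}

theorem mul_add_sq_norm_le_of_mem_span (hA : 0 ≤ A) (hB : 0 ≤ B)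
    (hlower : ∀ c : I ⊕ J →₀ ℝ, A * c.sum (fun _ r => r ^ 2) ≤
      ‖linearCombination ℝ (Sum.elim φ ψ) c‖ ^ 2)
    (hupper : ∀ c : I ⊕ J →₀ ℝ, ‖linearCombination ℝ (Sum.elim φ ψ) c‖ ^ 2 ≤
      B * c.sum (fun _ r => r ^ 2))
    {x y : H} (hx : x ∈ span ℝ (range φ)) (hy : y ∈ span ℝ (range ψ)) :
    A * (‖x‖ ^ 2 + ‖y‖ ^ 2) ≤ B * ‖x - y‖ ^ 2 := by
  rw [← range_linearCombination] at hx hy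
  obtain ⟨a, rfl⟩ := hx
  obtain ⟨b, rfl⟩ := hy
  have hx_le : ‖linearCombination ℝ φ a‖ ^ 2 ≤ B * a.sum (fun _ r => r ^ 2) := by
    simpa [linearCombination_sumElim, sum_sumElim, Function.comp_def] using hupper (sumElim a 0)
  have hy_le : ‖linearCombination ℝ ψ b‖ ^ 2 ≤ B * b.sum (fun _ r => r ^ 2) := by
    simpa [linearCombination_sumElim, sum_sumElim, Function.comp_def] using hupper (sumElim 0 b)
  have hdiff : A * (a.sum (fun _ r => r ^ 2) + b.sum (fun _ r => r ^ 2)) ≤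
      ‖linearCombination ℝ φ a - linearCombination ℝ ψ b‖ ^ 2 := by
    simpa [linearCombination_sumElim, sum_sumElim, Function.comp_def, sum_neg_index,
      sub_eq_add_neg] using hlower (sumElim a (-b))
  calc A * (‖linearCombination ℝ φ a‖ ^ 2 + ‖linearCombination ℝ ψ b‖ ^ 2)
      ≤ A * (B * a.sum (fun _ r => r ^ 2) + B * b.sum (fun _ r => r ^ 2)) := by gcongr
    _ = B * (A * (a.sum (fun _ r => r ^ 2) + b.sum (fun _ r => r ^ 2))) := by ring
    _ ≤ B * ‖linearCombination ℝ φ a - linearCombination ℝ ψ b‖ ^ 2 := by gcongr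

theorem mul_add_sq_norm_le_of_mem_topologicalClosure (hA : 0 ≤ A) (hB : 0 ≤ B)
    (hlower : ∀ c : I ⊕ J →₀ ℝ, A * c.sum (fun _ r => r ^ 2) ≤
      ‖linearCombination ℝ (Sum.elim φ ψ) c‖ ^ 2)
    (hupper : ∀ c : I ⊕ J →₀ ℝ, ‖linearCombination ℝ (Sum.elim φ ψ) c‖ ^ 2 ≤
      B * c.sum (fun _ r => r ^ 2))
    {x y : H} (hx : x ∈ (span ℝ (range φ)).topologicalClosure)
    (hy : y ∈ (span ℝ (range ψ)).topologicalClosure) :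
    A * (‖x‖ ^ 2 + ‖y‖ ^ 2) ≤ B * ‖x - y‖ ^ 2 := by
  have hxy : (x, y) ∈ closure ((span ℝ (range φ) : Set H) ×ˢ (span ℝ (range ψ) : Set H)) := by
    rw [closure_prod_eq]
    exact ⟨hx, hy⟩
  refine le_on_closure (f := fun p : H × H => A * (‖p.1‖ ^ 2 + ‖p.2‖ ^ 2))
    (g := fun p => B * ‖p.1 - p.2‖ ^ 2) ?_ (by fun_prop) (by fun_prop) hxy
  rintro ⟨x, y⟩ ⟨hx, hy⟩
  exact mul_add_sq_norm_le_of_mem_span hA hB hlower hupper hx hy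

end RieszUnion

theorem stmt_12_general {H : Type*} [NormedAddCommGroup H] [InnerProductSpace ℝ H]
    {I J : Type*} (φ : I → H) (ψ : J → H) (A B : ℝ) (hA : 0 < A) (hAB : A ≤ B)
    (hunion : ∀ c : (I ⊕ J) →₀ ℝ,
      A * (∑ k ∈ c.support, (c k) ^ 2) ≤ ‖∑ k ∈ c.support, c k • Sum.elim φ ψ k‖ ^ 2 ∧
      ‖∑ k ∈ c.support, c k • Sum.elim φ ψ k‖ ^ 2 ≤ B * (∑ k ∈ c.support, (c k) ^ 2)) :
    ∀ x y : H, x ∈ (Submodule.span ℝ (Set.range φ)).topologicalClosure →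
      y ∈ (Submodule.span ℝ (Set.range ψ)).topologicalClosure →
      (‖x‖ = 1 ∨ ‖y‖ = 1) → A / B ≤ ‖x - y‖ ^ 2 := by
  intro x y hx hy hnorm
  have hB : 0 < B := hA.trans_le hAB
  have key := mul_add_sq_norm_le_of_mem_topologicalClosure hA.le hB.le
    (fun c => (hunion c).1) (fun c => (hunion c).2) hx hy
  have hone : 1 ≤ ‖x‖ ^ 2 + ‖y‖ ^ 2 := by
    rcases hnorm with h | h <;> simp only [h] <;> nlinarith [sq_nonneg ‖x‖, sq_nonneg ‖y‖]
  rw [div_le_iff₀ hB]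
  nlinarith

/-- Quantitative version of (i) ⇒ (ii): if the union of two Riesz sequences is a
Riesz sequence with bounds `A, B`, then any `x` in the closed span of `φ` and `y`
in the closed span of `ψ` with `‖x‖ = 1` or `‖y‖ = 1` satisfy `‖x − y‖² ≥ A/B`. -/
theorem stmt_12 {H : Type*} [NormedAddCommGroup H] [InnerProductSpace ℝ H]
    {I J : Type*} (φ : I → H) (ψ : J → H) (A B : ℝ) (hA : 0 < A) (hAB : A ≤ B)
    (hφ : ∃ A' B' : ℝ, 0 < A' ∧ A' ≤ B' ∧ ∀ c : I →₀ ℝ,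
      A' * (∑ i ∈ c.support, (c i) ^ 2) ≤ ‖∑ i ∈ c.support, c i • φ i‖ ^ 2 ∧
      ‖∑ i ∈ c.support, c i • φ i‖ ^ 2 ≤ B' * (∑ i ∈ c.support, (c i) ^ 2))
    (hψ : ∃ A' B' : ℝ, 0 < A' ∧ A' ≤ B' ∧ ∀ c : J →₀ ℝ,
      A' * (∑ j ∈ c.support, (c j) ^ 2) ≤ ‖∑ j ∈ c.support, c j • ψ j‖ ^ 2 ∧
      ‖∑ j ∈ c.support, c j • ψ j‖ ^ 2 ≤ B' * (∑ j ∈ c.support, (c j) ^ 2))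
    (hunion : ∀ c : (I ⊕ J) →₀ ℝ,
      A * (∑ k ∈ c.support, (c k) ^ 2) ≤ ‖∑ k ∈ c.support, c k • Sum.elim φ ψ k‖ ^ 2 ∧
      ‖∑ k ∈ c.support, c k • Sum.elim φ ψ k‖ ^ 2 ≤ B * (∑ k ∈ c.support, (c k) ^ 2)) :
    ∀ x y : H, x ∈ (Submodule.span ℝ (Set.range φ)).topologicalClosure →
      y ∈ (Submodule.span ℝ (Set.range ψ)).topologicalClosure →
      (‖x‖ = 1 ∨ ‖y‖ = 1) → A / B ≤ ‖x - y‖ ^ 2 :=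
  stmt_12_general φ ψ A B hA hAB hunion
end

section
/- Let Φ = {φ_i}_{i∈I} and Ψ = {ψ_i}_{i∈I} be frames for H with frame bounds A₁, B₁ and A₂, B₂ respectively. Suppose there is 0 < λ < 1 with λ(√B₁ + √B₂) ≤ A₁/2 such that ‖∑_{i∈I} a_i(φ_i − ψ_i)‖ ≤ λ(∑|a_i|²)^{1/2} for all ℓ² sequences {a_i}. Then for every σ ⊆ I, the family {ψ_i}_{i∈σ} ∪ {φ_i}_{i∈σ^c} is a frame for H with frame bounds A₁/2 and B₁+B₂; hence Φ and Ψ are woven. -/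
open scoped RealInnerProductSpace BigOperators Classical

/-!
The upper bound is termwise: each square of the woven family is dominated by the sum of the
corresponding squares for `Φ` and `Ψ`. For the lower bound, the woven sum differs from the
`Φ`-sum only on `σ`, where `⟪x, φ i⟫² - ⟪x, ψ i⟫² = (⟪x, φ i⟫ + ⟪x, ψ i⟫) ⟪x, φ i - ψ i⟫`.
By duality the perturbation hypothesis bounds the analysis operator of `φ - ψ` by `λ`, so
Cauchy–Schwarz bounds the defect by `(√B₁ + √B₂) λ ‖x‖² ≤ A₁/2 ‖x‖²`.
-/

section Sequences

variable {I : Type*} {f g : I → ℝ}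

theorem summable_mul_and_tsum_mul_le_sqrt_mul_sqrt (hf : Summable fun i => f i ^ 2)
    (hg : Summable fun i => g i ^ 2) :
    (Summable fun i => f i * g i) ∧
      ∑' i, f i * g i ≤ √(∑' i, f i ^ 2) * √(∑' i, g i ^ 2) := by
  have hpow : ∀ h : I → ℝ, (fun i => |h i| ^ (2 : ℝ)) = fun i => h i ^ 2 := fun h => by
    ext i; rw [Real.rpow_two, sq_abs]
  obtain ⟨habs, hle⟩ := Real.summable_and_inner_le_Lp_mul_Lq_tsum_of_nonneg
    Real.HolderConjugate.two_two (fun i => abs_nonneg (f i)) (fun i => abs_nonneg (g i))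
    (by rwa [hpow]) (by rwa [hpow])
  simp only [hpow, ← Real.sqrt_eq_rpow, ← abs_mul] at hle habs
  have hsum : Summable fun i => f i * g i := habs.of_abs
  exact ⟨hsum, (hsum.tsum_le_tsum (fun i => le_abs_self _) habs).trans hle⟩

theorem sq_ite_le_add (p : Prop) [Decidable p] (a b : ℝ) :
    (if p then b else a) ^ 2 ≤ a ^ 2 + b ^ 2 := by
  split_ifs <;> nlinarith [sq_nonneg a, sq_nonneg b]

theorem summable_sq_ite (σ : Set I) (hf : Summable fun i => f i ^ 2)
    (hg : Summable fun i => g i ^ 2) :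
    Summable fun i => (if i ∈ σ then g i else f i) ^ 2 :=
  (hf.add hg).of_nonneg_of_le (fun _ => sq_nonneg _) fun _ => sq_ite_le_add _ _ _

theorem tsum_sq_ite_le (σ : Set I) (hf : Summable fun i => f i ^ 2)
    (hg : Summable fun i => g i ^ 2) :
    ∑' i, (if i ∈ σ then g i else f i) ^ 2 ≤ ∑' i, f i ^ 2 + ∑' i, g i ^ 2 := by
  rw [← hf.tsum_add hg]
  exact (summable_sq_ite σ hf hg).tsum_le_tsum (fun i => sq_ite_le_add _ _ _) (hf.add hg)

theorem sq_indicator_le (σ : Set I) (i : I) : σ.indicator f i ^ 2 ≤ f i ^ 2 := by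
  by_cases hi : i ∈ σ <;> simp [hi, sq_nonneg]

theorem summable_sq_indicator (σ : Set I) (hf : Summable fun i => f i ^ 2) :
    Summable fun i => σ.indicator f i ^ 2 :=
  hf.of_nonneg_of_le (fun _ => sq_nonneg _) (sq_indicator_le σ)

theorem tsum_sq_indicator_le (σ : Set I) (hf : Summable fun i => f i ^ 2) :
    ∑' i, σ.indicator f i ^ 2 ≤ ∑' i, f i ^ 2 :=
  (summable_sq_indicator σ hf).tsum_le_tsum (sq_indicator_le σ) hf

theorem tsum_sq_sub_tsum_sq_ite_le (σ : Set I) (hf : Summable fun i => f i ^ 2)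
    (hg : Summable fun i => g i ^ 2) :
    ∑' i, f i ^ 2 - ∑' i, (if i ∈ σ then g i else f i) ^ 2 ≤
      (√(∑' i, f i ^ 2) + √(∑' i, g i ^ 2)) * √(∑' i, (f i - g i) ^ 2) := by
  have hfg : Summable fun i => (f i - g i) ^ 2 :=
    ((hf.add hg).mul_left 2).of_nonneg_of_le (fun _ => sq_nonneg _)
      fun i => by nlinarith [sq_nonneg (f i + g i)]
  obtain ⟨hF, hFle⟩ := summable_mul_and_tsum_mul_le_sqrt_mul_sqrt (summable_sq_indicator σ hf) hfg
  obtain ⟨hG, hGle⟩ := summable_mul_and_tsum_mul_le_sqrt_mul_sqrt (summable_sq_indicator σ hg) hfg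
  have hsplit : ∀ i, f i ^ 2 - (if i ∈ σ then g i else f i) ^ 2 =
      σ.indicator f i * (f i - g i) + σ.indicator g i * (f i - g i) := fun i => by
    by_cases hi : i ∈ σ <;> simp [hi]; ring
  calc ∑' i, f i ^ 2 - ∑' i, (if i ∈ σ then g i else f i) ^ 2
      = ∑' i, σ.indicator f i * (f i - g i) + ∑' i, σ.indicator g i * (f i - g i) := by
        rw [← hf.tsum_sub (summable_sq_ite σ hf hg), ← hF.tsum_add hG]
        exact tsum_congr hsplit
    _ ≤ √(∑' i, σ.indicator f i ^ 2) * √(∑' i, (f i - g i) ^ 2) +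
        √(∑' i, σ.indicator g i ^ 2) * √(∑' i, (f i - g i) ^ 2) := add_le_add hFle hGle
    _ ≤ _ := by
        rw [add_mul]
        gcongr ?_ * _ + ?_ * _
        · exact Real.sqrt_le_sqrt (tsum_sq_indicator_le σ hf)
        · exact Real.sqrt_le_sqrt (tsum_sq_indicator_le σ hg)

end Sequences

section Frames

variable {H : Type*} [NormedAddCommGroup H] [InnerProductSpace ℝ H] {I : Type*}

theorem sum_sq_inner_le_of_synthesis_bound {χ : I → H} {lam : ℝ}
    (hχ : ∀ a : I →₀ ℝ, ‖∑ i ∈ a.support, a i • χ i‖ ≤ lam * √(∑ i ∈ a.support, a i ^ 2))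
    (x : H) (S : Finset I) : ∑ i ∈ S, ⟪x, χ i⟫ ^ 2 ≤ (lam * ‖x‖) ^ 2 := by
  set T := ∑ i ∈ S, ⟪x, χ i⟫ ^ 2
  let a : I →₀ ℝ := Finsupp.onFinset S (fun i => if i ∈ S then ⟪x, χ i⟫ else 0)
    fun i hi => by by_contra h; simp [h] at hi
  have hsum : ∑ i ∈ a.support, a i • χ i = ∑ i ∈ S, ⟪x, χ i⟫ • χ i := by
    change a.sum (fun i c => c • χ i) = _
    rw [Finsupp.onFinset_sum _ fun i => zero_smul ℝ (χ i)]
    exact Finset.sum_congr rfl fun i hi => by simp [hi]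
  have hsq : ∑ i ∈ a.support, a i ^ 2 = T := by
    change a.sum (fun _ c => c ^ 2) = _
    rw [Finsupp.onFinset_sum _ fun _ => zero_pow two_ne_zero]
    exact Finset.sum_congr rfl fun i hi => by simp [hi]
  have hsynth : ‖∑ i ∈ S, ⟪x, χ i⟫ • χ i‖ ≤ lam * √T := hsum ▸ hsq ▸ hχ a
  have hT : T ≤ ‖x‖ * (lam * √T) :=
    calc T = ⟪x, ∑ i ∈ S, ⟪x, χ i⟫ • χ i⟫ := by simp [T, inner_sum, real_inner_smul_right, sq]
      _ ≤ ‖x‖ * ‖∑ i ∈ S, ⟪x, χ i⟫ • χ i‖ := real_inner_le_norm _ _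
      _ ≤ ‖x‖ * (lam * √T) := by gcongr
  have hT0 : 0 ≤ T := Finset.sum_nonneg fun _ _ => sq_nonneg _
  nlinarith [Real.sq_sqrt hT0, Real.sqrt_nonneg T, sq_nonneg (√T - lam * ‖x‖)]

theorem tsum_sq_inner_le_of_synthesis_bound {χ : I → H} {lam : ℝ}
    (hχ : ∀ a : I →₀ ℝ, ‖∑ i ∈ a.support, a i • χ i‖ ≤ lam * √(∑ i ∈ a.support, a i ^ 2))
    (x : H) : ∑' i, ⟪x, χ i⟫ ^ 2 ≤ (lam * ‖x‖) ^ 2 :=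
  tsum_le_of_sum_le' (sq_nonneg _) (sum_sq_inner_le_of_synthesis_bound hχ x)

theorem summable_sq_inner_of_lower_frame_bound {φ : I → H} {A : ℝ} (hA : 0 < A)
    (hφ : ∀ x : H, A * ‖x‖ ^ 2 ≤ ∑' i, ⟪x, φ i⟫ ^ 2) (x : H) :
    Summable fun i => ⟪x, φ i⟫ ^ 2 := by
  rcases eq_or_ne x 0 with rfl | hx
  · simp
  by_contra hs
  have := hφ x
  rw [tsum_eq_zero_of_not_summable hs] at this
  exact this.not_gt (by positivity)

end Frames

theorem stmt_16_general {H : Type*} [NormedAddCommGroup H] [InnerProductSpace ℝ H]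
    {I : Type*} (φ ψ : I → H) (A₁ B₁ A₂ B₂ : ℝ)
    (hA₁ : 0 < A₁) (hA₂ : 0 < A₂)
    (hφ : ∀ x : H,
      A₁ * ‖x‖ ^ 2 ≤ (∑' i : I, ⟪x, φ i⟫ ^ 2) ∧ (∑' i : I, ⟪x, φ i⟫ ^ 2) ≤ B₁ * ‖x‖ ^ 2)
    (hψ : ∀ x : H,
      A₂ * ‖x‖ ^ 2 ≤ (∑' i : I, ⟪x, ψ i⟫ ^ 2) ∧ (∑' i : I, ⟪x, ψ i⟫ ^ 2) ≤ B₂ * ‖x‖ ^ 2)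
    (lam : ℝ) (hlam0 : 0 < lam)
    (hlam : lam * (Real.sqrt B₁ + Real.sqrt B₂) ≤ A₁ / 2)
    (hperturb : ∀ a : I →₀ ℝ,
      ‖∑ i ∈ a.support, a i • (φ i - ψ i)‖ ≤
        lam * Real.sqrt (∑ i ∈ a.support, (a i) ^ 2)) :
    ∀ σ : Set I, ∀ x : H,
      A₁ / 2 * ‖x‖ ^ 2 ≤ (∑' i : I, ⟪x, if i ∈ σ then ψ i else φ i⟫ ^ 2) ∧
      (∑' i : I, ⟪x, if i ∈ σ then ψ i else φ i⟫ ^ 2) ≤ (B₁ + B₂) * ‖x‖ ^ 2 := by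
  intro σ x
  have hF := summable_sq_inner_of_lower_frame_bound hA₁ (fun y => (hφ y).1) x
  have hG := summable_sq_inner_of_lower_frame_bound hA₂ (fun y => (hψ y).1) x
  simp only [apply_ite (inner ℝ x)]
  have sqrt_le {s B : ℝ} (h : s ≤ B * ‖x‖ ^ 2) : √s ≤ √B * ‖x‖ := by
    rw [← Real.sqrt_sq (norm_nonneg x), ← Real.sqrt_mul' _ (sq_nonneg _)]
    exact Real.sqrt_le_sqrt h
  have hdiff : √(∑' i, (⟪x, φ i⟫ - ⟪x, ψ i⟫) ^ 2) ≤ lam * ‖x‖ := by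
    have := tsum_sq_inner_le_of_synthesis_bound hperturb x
    simp only [inner_sub_right] at this
    exact (Real.sqrt_le_sqrt this).trans_eq (Real.sqrt_sq (by positivity))
  have hprod := mul_le_mul (add_le_add (sqrt_le (hφ x).2) (sqrt_le (hψ x).2)) hdiff
    (Real.sqrt_nonneg _) (by positivity)
  refine ⟨?_, (tsum_sq_ite_le σ hF hG).trans (by linarith [(hφ x).2, (hψ x).2])⟩
  linarith [tsum_sq_sub_tsum_sq_ite_le σ hF hG, (hφ x).1,
    mul_le_mul_of_nonneg_right hlam (sq_nonneg ‖x‖)]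

/-- Perturbation theorem: if `‖∑ aᵢ(φᵢ − ψᵢ)‖ ≤ λ‖a‖₂` for all sequences with
`λ(√B₁ + √B₂) ≤ A₁/2`, then every weaving `{ψ_i}_{i∈σ} ∪ {φ_i}_{i∈σᶜ}` is a frame
with bounds `A₁/2` and `B₁ + B₂`; hence `Φ` and `Ψ` are woven. -/
theorem stmt_16 {H : Type*} [NormedAddCommGroup H] [InnerProductSpace ℝ H]
    {I : Type*} (φ ψ : I → H) (A₁ B₁ A₂ B₂ : ℝ)
    (hA₁ : 0 < A₁) (hAB₁ : A₁ ≤ B₁) (hA₂ : 0 < A₂) (hAB₂ : A₂ ≤ B₂)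
    (hφ : ∀ x : H,
      A₁ * ‖x‖ ^ 2 ≤ (∑' i : I, ⟪x, φ i⟫ ^ 2) ∧ (∑' i : I, ⟪x, φ i⟫ ^ 2) ≤ B₁ * ‖x‖ ^ 2)
    (hψ : ∀ x : H,
      A₂ * ‖x‖ ^ 2 ≤ (∑' i : I, ⟪x, ψ i⟫ ^ 2) ∧ (∑' i : I, ⟪x, ψ i⟫ ^ 2) ≤ B₂ * ‖x‖ ^ 2)
    (lam : ℝ) (hlam0 : 0 < lam) (hlam1 : lam < 1)
    (hlam : lam * (Real.sqrt B₁ + Real.sqrt B₂) ≤ A₁ / 2)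
    (hperturb : ∀ a : I →₀ ℝ,
      ‖∑ i ∈ a.support, a i • (φ i - ψ i)‖ ≤
        lam * Real.sqrt (∑ i ∈ a.support, (a i) ^ 2)) :
    ∀ σ : Set I, ∀ x : H,
      A₁ / 2 * ‖x‖ ^ 2 ≤ (∑' i : I, ⟪x, if i ∈ σ then ψ i else φ i⟫ ^ 2) ∧
      (∑' i : I, ⟪x, if i ∈ σ then ψ i else φ i⟫ ^ 2) ≤ (B₁ + B₂) * ‖x‖ ^ 2 :=
  stmt_16_general φ ψ A₁ B₁ A₂ B₂ hA₁ hA₂ hφ hψ lam hlam0 hlam hperturb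
end

section
/- Let {φ_i}_{i∈I} be a frame for H with frame bounds A, B and let T : H → H be a bounded operator with ‖Id − T‖² < A/B. Then for every σ ⊆ I, the family {φ_i}_{i∈σ} ∪ {Tφ_i}_{i∈σ^c} is a frame for H with lower frame bound (√A − √B‖Id − T*‖)² > 0; in particular {φ_i} and {Tφ_i} are woven. -/
/-! The coefficients of the woven family at `x` are `⟪x, φ i⟫ - 1_{σᶜ}(i) ⟪(Id - T*) x, φ i⟫`, and
by the upper frame bound the subtracted sequence has `ℓ²`-norm at most `√B ‖Id - T*‖ ‖x‖`.
The triangle inequality in `ℓ²` (Minkowski) then squeezes the `ℓ²`-norm of the woven coefficients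
between `(√A - √B ‖Id - T*‖) ‖x‖` and `(√B + √B ‖Id - T*‖) ‖x‖`, and the lower constant is positive
because `‖Id - T*‖ = ‖Id - T‖`. -/

open scoped RealInnerProductSpace Classical

section SquareSummable

variable {I : Type*} {f g : I → ℝ}

theorem summable_sq_add_and_sqrt_tsum_sq_add_le (hf : Summable fun i => f i ^ 2)
    (hg : Summable fun i => g i ^ 2) :
    (Summable fun i => (f i + g i) ^ 2) ∧
      √(∑' i, (f i + g i) ^ 2) ≤ √(∑' i, f i ^ 2) + √(∑' i, g i ^ 2) := by
  have habs (h : I → ℝ) : (fun i => |h i| ^ (2 : ℝ)) = fun i => h i ^ 2 := by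
    simp only [Real.rpow_two, sq_abs]
  obtain ⟨hsum, hle⟩ := Real.Lp_add_le_tsum_of_nonneg one_le_two
    (fun i => abs_nonneg (f i)) (fun i => abs_nonneg (g i)) (by rwa [habs]) (by rwa [habs])
  simp only [Real.rpow_two, sq_abs, ← Real.sqrt_eq_rpow] at hsum hle
  have hpt (i : I) : (f i + g i) ^ 2 ≤ (|f i| + |g i|) ^ 2 := by
    rw [← sq_abs]
    exact pow_le_pow_left₀ (abs_nonneg _) (abs_add_le _ _) 2
  have hsum' := hsum.of_nonneg_of_le (fun i => sq_nonneg _) hpt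
  exact ⟨hsum', (Real.sqrt_le_sqrt (hsum'.tsum_le_tsum hpt hsum)).trans hle⟩

theorem summable_sq_sub_and_sqrt_tsum_sq_sub_mem_Icc (hf : Summable fun i => f i ^ 2)
    (hg : Summable fun i => g i ^ 2) :
    (Summable fun i => (f i - g i) ^ 2) ∧
      √(∑' i, (f i - g i) ^ 2) ∈ Set.Icc (√(∑' i, f i ^ 2) - √(∑' i, g i ^ 2))
        (√(∑' i, f i ^ 2) + √(∑' i, g i ^ 2)) := by
  have hg' : Summable fun i => (-g i) ^ 2 := by simpa only [neg_sq] using hg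
  obtain ⟨hsub, hupper⟩ := summable_sq_add_and_sqrt_tsum_sq_add_le hf hg'
  simp only [← sub_eq_add_neg, neg_sq] at hsub hupper
  have hlower := (summable_sq_add_and_sqrt_tsum_sq_add_le hsub hg).2
  simp only [sub_add_cancel] at hlower
  exact ⟨hsub, by linarith, hupper⟩

theorem summable_indicator_sq_and_tsum_le (s : Set I)
    (hg : Summable fun i => g i ^ 2) :
    (Summable fun i => s.indicator g i ^ 2) ∧ ∑' i, s.indicator g i ^ 2 ≤ ∑' i, g i ^ 2 := by
  have hpt (i : I) : s.indicator g i ^ 2 ≤ g i ^ 2 := by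
    by_cases hi : i ∈ s <;> simp [hi, sq_nonneg]
  have hsum := hg.of_nonneg_of_le (fun i => sq_nonneg _) hpt
  exact ⟨hsum, hsum.tsum_le_tsum hpt hg⟩

end SquareSummable

theorem sqrt_mul_lt_sqrt_of_sq_lt_div {A B c : ℝ} (hA : 0 < A) (hc : c ^ 2 < A / B) :
    0 < B ∧ √B * c < √A := by
  have hB : 0 < B := by
    by_contra! hB
    linarith [div_nonpos_of_nonneg_of_nonpos hA.le hB, sq_nonneg c]
  refine ⟨hB, ?_⟩
  rcases lt_or_ge c 0 with hc0 | hc0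
  · nlinarith [Real.sqrt_nonneg B, Real.sqrt_pos.mpr hA]
  have hcB : √(c ^ 2 * B) < √A := Real.sqrt_lt_sqrt (by positivity) ((lt_div_iff₀ hB).mp hc)
  rwa [Real.sqrt_mul' _ hB.le, Real.sqrt_sq hc0, mul_comm] at hcB

theorem norm_id_sub_adjoint {𝕜 E : Type*} [RCLike 𝕜] [NormedAddCommGroup E]
    [InnerProductSpace 𝕜 E] [CompleteSpace E] (T : E →L[𝕜] E) :
    ‖ContinuousLinearMap.id 𝕜 E - ContinuousLinearMap.adjoint T‖ =
      ‖ContinuousLinearMap.id 𝕜 E - T‖ := by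
  rw [← LinearIsometryEquiv.norm_map ContinuousLinearMap.adjoint, map_sub,
    ContinuousLinearMap.adjoint_id, ContinuousLinearMap.adjoint_adjoint]

section Frame

variable {H : Type*} [NormedAddCommGroup H] [InnerProductSpace ℝ H] {I : Type*} {φ : I → H}
  {A B : ℝ}

theorem summable_inner_sq_of_frame_lower_bound (hA : 0 < A)
    (hlower : ∀ x : H, A * ‖x‖ ^ 2 ≤ ∑' i, ⟪x, φ i⟫ ^ 2) (x : H) :
    Summable fun i => ⟪x, φ i⟫ ^ 2 := by
  rcases eq_or_ne x 0 with rfl | hx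
  · simp
  by_contra hsum
  have hpos : 0 < A * ‖x‖ ^ 2 := by positivity
  linarith [hlower x, tsum_eq_zero_of_not_summable hsum]

theorem sqrt_tsum_inner_sq_le (hupper : ∀ x : H, ∑' i, ⟪x, φ i⟫ ^ 2 ≤ B * ‖x‖ ^ 2) (x : H) :
    √(∑' i, ⟪x, φ i⟫ ^ 2) ≤ √B * ‖x‖ := by
  rw [← Real.sqrt_sq (norm_nonneg x), ← Real.sqrt_mul' _ (sq_nonneg _)]
  exact Real.sqrt_le_sqrt (hupper x)

theorem sqrt_mul_le_sqrt_tsum_inner_sq (hlower : ∀ x : H, A * ‖x‖ ^ 2 ≤ ∑' i, ⟪x, φ i⟫ ^ 2)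
    (x : H) : √A * ‖x‖ ≤ √(∑' i, ⟪x, φ i⟫ ^ 2) := by
  rw [← Real.sqrt_sq (norm_nonneg x), ← Real.sqrt_mul' _ (sq_nonneg _)]
  exact Real.sqrt_le_sqrt (hlower x)

variable [CompleteSpace H]

theorem inner_ite_apply_eq_sub_indicator (T : H →L[ℝ] H) (σ : Set I) (x : H) (i : I) :
    ⟪x, if i ∈ σ then φ i else T (φ i)⟫ =
      ⟪x, φ i⟫ - σᶜ.indicator (fun i => ⟪(ContinuousLinearMap.id ℝ H -
        ContinuousLinearMap.adjoint T) x, φ i⟫) i := by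
  by_cases hi : i ∈ σ
  · simp [hi]
  · simp [hi, inner_sub_left, ContinuousLinearMap.adjoint_inner_left]

theorem sqrt_tsum_inner_woven_sq_mem_Icc (hA : 0 < A)
    (hφ : ∀ x : H, A * ‖x‖ ^ 2 ≤ ∑' i, ⟪x, φ i⟫ ^ 2 ∧ ∑' i, ⟪x, φ i⟫ ^ 2 ≤ B * ‖x‖ ^ 2)
    (T : H →L[ℝ] H) (σ : Set I) (x : H) :
    √(∑' i, ⟪x, if i ∈ σ then φ i else T (φ i)⟫ ^ 2) ∈ Set.Icc
      ((√A - √B * ‖ContinuousLinearMap.id ℝ H - ContinuousLinearMap.adjoint T‖) * ‖x‖)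
      ((√B + √B * ‖ContinuousLinearMap.id ℝ H - ContinuousLinearMap.adjoint T‖) * ‖x‖) := by
  set S := ContinuousLinearMap.id ℝ H - ContinuousLinearMap.adjoint T
  have hsum := summable_inner_sq_of_frame_lower_bound hA (fun x => (hφ x).1)
  obtain ⟨hdsum, hdle⟩ := summable_indicator_sq_and_tsum_le σᶜ (hsum (S x))
  have hd : √(∑' i, σᶜ.indicator (fun i => ⟪S x, φ i⟫) i ^ 2) ≤ √B * ‖S‖ * ‖x‖ :=
    calc _ ≤ √(∑' i, ⟪S x, φ i⟫ ^ 2) := Real.sqrt_le_sqrt hdle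
      _ ≤ √B * ‖S x‖ := sqrt_tsum_inner_sq_le (fun x => (hφ x).2) (S x)
      _ ≤ √B * ‖S‖ * ‖x‖ := by
        rw [mul_assoc]
        gcongr
        exact S.le_opNorm x
  simp only [inner_ite_apply_eq_sub_indicator T σ x]
  obtain ⟨-, hlower, hupper⟩ := summable_sq_sub_and_sqrt_tsum_sq_sub_mem_Icc (hsum x) hdsum
  have hu₁ := sqrt_mul_le_sqrt_tsum_inner_sq (fun x => (hφ x).1) x
  have hu₂ := sqrt_tsum_inner_sq_le (fun x => (hφ x).2) x
  constructor <;> linarith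

end Frame

theorem stmt_17_general {H : Type*} [NormedAddCommGroup H] [InnerProductSpace ℝ H]
    [CompleteSpace H] {I : Type*} (φ : I → H) (A B : ℝ) (hA : 0 < A)
    (hφ : ∀ x : H,
      A * ‖x‖ ^ 2 ≤ (∑' i : I, ⟪x, φ i⟫ ^ 2) ∧ (∑' i : I, ⟪x, φ i⟫ ^ 2) ≤ B * ‖x‖ ^ 2)
    (T : H →L[ℝ] H)
    (hT : ‖(ContinuousLinearMap.id ℝ H) - T‖ ^ 2 < A / B) :
    0 < (Real.sqrt A - Real.sqrt B *
        ‖(ContinuousLinearMap.id ℝ H) - ContinuousLinearMap.adjoint T‖) ^ 2 ∧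
    (∀ σ : Set I, ∀ x : H,
      (Real.sqrt A - Real.sqrt B *
          ‖(ContinuousLinearMap.id ℝ H) - ContinuousLinearMap.adjoint T‖) ^ 2 * ‖x‖ ^ 2 ≤
        ∑' i : I, ⟪x, if i ∈ σ then φ i else T (φ i)⟫ ^ 2) ∧
    (∃ B' : ℝ, 0 < B' ∧ ∀ σ : Set I, ∀ x : H,
      (∑' i : I, ⟪x, if i ∈ σ then φ i else T (φ i)⟫ ^ 2) ≤ B' * ‖x‖ ^ 2) := by
  have hbounds := sqrt_tsum_inner_woven_sq_mem_Icc hA hφ T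
  set c := ‖ContinuousLinearMap.id ℝ H - ContinuousLinearMap.adjoint T‖ with hc
  obtain ⟨hB, hcA⟩ : 0 < B ∧ √B * c < √A :=
    sqrt_mul_lt_sqrt_of_sq_lt_div hA (by rwa [hc, norm_id_sub_adjoint])
  have hgap : 0 < √A - √B * c := sub_pos.mpr hcA
  refine ⟨pow_pos hgap 2, fun σ x => ?_, ⟨B * (1 + c) ^ 2, by positivity, fun σ x => ?_⟩⟩
  · have hlower := (Real.le_sqrt (mul_nonneg hgap.le (norm_nonneg x))
      (tsum_nonneg fun i => sq_nonneg _)).mp (hbounds σ x).1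
    rwa [mul_pow] at hlower
  · have hupper := (Real.sqrt_le_left (by positivity)).mp (hbounds σ x).2
    calc _ ≤ ((√B + √B * c) * ‖x‖) ^ 2 := hupper
      _ = B * (1 + c) ^ 2 * ‖x‖ ^ 2 := by
        linear_combination ((1 + c) * ‖x‖) ^ 2 * Real.sq_sqrt hB.le

/-- If `φ` is a frame with bounds `A, B` and `T` is a bounded operator with
`‖Id − T‖² < A/B`, then every weaving `{φ_i}_{i∈σ} ∪ {Tφ_i}_{i∈σᶜ}` is a frame
with lower bound `(√A − √B‖Id − T*‖)² > 0`; in particular `{φ_i}` and `{Tφ_i}`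
are woven. -/
theorem stmt_17 {H : Type*} [NormedAddCommGroup H] [InnerProductSpace ℝ H]
    [CompleteSpace H] {I : Type*} (φ : I → H) (A B : ℝ) (hA : 0 < A) (hAB : A ≤ B)
    (hφ : ∀ x : H,
      A * ‖x‖ ^ 2 ≤ (∑' i : I, ⟪x, φ i⟫ ^ 2) ∧ (∑' i : I, ⟪x, φ i⟫ ^ 2) ≤ B * ‖x‖ ^ 2)
    (T : H →L[ℝ] H)
    (hT : ‖(ContinuousLinearMap.id ℝ H) - T‖ ^ 2 < A / B) :
    0 < (Real.sqrt A - Real.sqrt B *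
        ‖(ContinuousLinearMap.id ℝ H) - ContinuousLinearMap.adjoint T‖) ^ 2 ∧
    (∀ σ : Set I, ∀ x : H,
      (Real.sqrt A - Real.sqrt B *
          ‖(ContinuousLinearMap.id ℝ H) - ContinuousLinearMap.adjoint T‖) ^ 2 * ‖x‖ ^ 2 ≤
        ∑' i : I, ⟪x, if i ∈ σ then φ i else T (φ i)⟫ ^ 2) ∧
    (∃ B' : ℝ, 0 < B' ∧ ∀ σ : Set I, ∀ x : H,
      (∑' i : I, ⟪x, if i ∈ σ then φ i else T (φ i)⟫ ^ 2) ≤ B' * ‖x‖ ^ 2) :=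
  stmt_17_general φ A B hA hφ T hT
end

section
/- Let Φ = {φ_i}_{i∈I} be a frame for H with frame bounds A, B and frame operator S (Sx = ∑_i ⟨x,φ_i⟩φ_i). If B/A < 2, then Φ and the scaled canonical dual frame Ψ = {(2AB/(A+B)) S⁻¹ φ_i}_{i∈I} are woven, i.e., for every σ ⊆ I the family {φ_i}_{i∈σ} ∪ {(2AB/(A+B))S⁻¹φ_i}_{i∈σ^c} is a frame with uniform bounds. -/
/-!
Let `m = (A + B) / 2`. The frame operator `S` is self-adjoint with `A ≤ S ≤ B`, so
`‖S - m‖ ≤ (B - A) / 2`, i.e. `(S - A)(S - B) ≤ 0`; with `c = 2AB / (A + B)` this gives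
`‖1 - c S⁻¹‖ ≤ r := (B - A) / (B + A)`. For any `σ`, the coefficients of `x` against the woven
family differ from `⟪x, φ i⟫` only off `σ`, by `⟪x - c S⁻¹ x, φ i⟫`, a sequence of `ℓ²`-norm at
most `√B r ‖x‖`. By Minkowski the `ℓ²`-norm of the woven coefficients is within that distance of
`√(∑ ⟪x, φ i⟫²) ∈ [√A ‖x‖, √B ‖x‖]`, and `B / A < 2` makes `√B r < √A`.
-/

open scoped RealInnerProductSpace BigOperators Classical

open scoped InnerProduct

section SquareSummable

variable {ι : Type*} {f g : ι → ℝ}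

lemma summable_sq_add (hf : Summable fun i => f i ^ 2) (hg : Summable fun i => g i ^ 2) :
    Summable fun i => (f i + g i) ^ 2 :=
  .of_nonneg_of_le (fun _ => sq_nonneg _) (fun _ => add_sq_le) ((hf.add hg).mul_left 2)

lemma sqrt_tsum_sq_add_le (hf : Summable fun i => f i ^ 2) (hg : Summable fun i => g i ^ 2) :
    √(∑' i, (f i + g i) ^ 2) ≤ √(∑' i, f i ^ 2) + √(∑' i, g i ^ 2) := by
  have minkowski := Real.Lp_add_le_tsum_of_nonneg (p := 2) one_le_two
    (fun i => abs_nonneg (f i)) (fun i => abs_nonneg (g i)) (by simpa using hf) (by simpa using hg)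
  simp only [Real.rpow_two, sq_abs, ← Real.sqrt_eq_rpow] at minkowski
  refine le_trans (Real.sqrt_le_sqrt ?_) minkowski.2
  refine Summable.tsum_le_tsum (fun i => ?_) (summable_sq_add hf hg) minkowski.1
  exact sq_le_sq' (by linarith [neg_abs_le (f i), neg_abs_le (g i)])
    (add_le_add (le_abs_self _) (le_abs_self _))

lemma abs_sqrt_tsum_sq_sub_sub_le (hf : Summable fun i => f i ^ 2)
    (hg : Summable fun i => g i ^ 2) :
    |√(∑' i, (f i - g i) ^ 2) - √(∑' i, f i ^ 2)| ≤ √(∑' i, g i ^ 2) := by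
  have hg' : Summable fun i => (-g i) ^ 2 := by simpa using hg
  have hfg : Summable fun i => (f i - g i) ^ 2 := by
    simpa [sub_eq_add_neg] using summable_sq_add hf hg'
  rw [abs_le]
  constructor
  · simpa using sqrt_tsum_sq_add_le hfg hg
  · linarith [show √(∑' i, (f i - g i) ^ 2) ≤ √(∑' i, f i ^ 2) + √(∑' i, g i ^ 2) by
      simpa [sub_eq_add_neg] using sqrt_tsum_sq_add_le hf hg']

end SquareSummable

namespace LinearMap.IsSymmetric

variable {E : Type*} [NormedAddCommGroup E] [InnerProductSpace ℝ E] {T : E →L[ℝ] E} {A B : ℝ}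

theorem norm_sub_smul_one_le (hT : (T : E →ₗ[ℝ] E).IsSymmetric) (hAB : A ≤ B)
    (hA : ∀ x, A * ‖x‖ ^ 2 ≤ ⟪T x, x⟫) (hB : ∀ x, ⟪T x, x⟫ ≤ B * ‖x‖ ^ 2) :
    ‖T - ((A + B) / 2) • 1‖ ≤ (B - A) / 2 := by
  have hsymm : ((T - ((A + B) / 2) • 1 : E →L[ℝ] E) : E →ₗ[ℝ] E).IsSymmetric := by
    simpa using hT.sub (IsSymmetric.one.smul (conj_trivial _))
  rw [ContinuousLinearMap.norm_eq_iSup_rayleighQuotient _ hsymm]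
  refine ciSup_le fun x => ?_
  rcases eq_or_ne x 0 with rfl | hx
  · rw [ContinuousLinearMap.rayleighQuotient_apply_zero, abs_zero]; linarith
  have hx2 : 0 < ‖x‖ ^ 2 := by positivity
  simp only [ContinuousLinearMap.rayleighQuotient, ContinuousLinearMap.reApplyInnerSelf_apply,
    RCLike.re_to_real, abs_div, abs_of_pos hx2, div_le_iff₀ hx2, abs_le]
  have hexpand : ⟪(T - ((A + B) / 2) • 1) x, x⟫ = ⟪T x, x⟫ - (A + B) / 2 * ‖x‖ ^ 2 := by
    simp [inner_sub_left, real_inner_smul_left]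
  rw [hexpand]
  constructor <;> linarith [hA x, hB x]

theorem norm_one_sub_smul_le_of_rightInverse {S Sinv : E →L[ℝ] E}
    (hS : (S : E →ₗ[ℝ] E).IsSymmetric) (hinv : Function.RightInverse Sinv S)
    (hA : 0 < A) (hAB : A ≤ B)
    (hlow : ∀ x, A * ‖x‖ ^ 2 ≤ ⟪S x, x⟫) (hup : ∀ x, ⟪S x, x⟫ ≤ B * ‖x‖ ^ 2) :
    ‖1 - (2 * A * B / (A + B)) • Sinv‖ ≤ (B - A) / (A + B) := by
  have hApB : 0 < A + B := by linarith
  have hr : 0 ≤ (B - A) / (A + B) := div_nonneg (by linarith) hApB.le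
  suffices key : ∀ u, ‖S u - (2 * A * B / (A + B)) • u‖ ≤ (B - A) / (A + B) * ‖S u‖ by
    refine ContinuousLinearMap.opNorm_le_bound _ hr fun x => ?_
    simpa [hinv x] using key (Sinv x)
  intro u
  have hmid := hS.norm_sub_smul_one_le hAB hlow hup
  have hsq : ‖S u - ((A + B) / 2) • u‖ ^ 2 ≤ ((B - A) / 2 * ‖u‖) ^ 2 := by
    refine pow_le_pow_left₀ (norm_nonneg _) ?_ 2
    simpa using (S - ((A + B) / 2) • 1).le_of_opNorm_le hmid u
  -- `(S - A)(S - B) ≤ 0` as a quadratic form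
  have hquad : ‖S u‖ ^ 2 - (A + B) * ⟪S u, u⟫ + A * B * ‖u‖ ^ 2 ≤ 0 := by
    rw [norm_sub_sq_real, real_inner_smul_right, norm_smul, Real.norm_eq_abs, mul_pow, sq_abs]
      at hsq
    nlinarith
  -- with `c = 2AB / (A + B)`, `(A + B)² ‖S u - c u‖² - (B - A)² ‖S u‖²` is `4AB` times the
  -- left side of `hquad`
  refine (pow_le_pow_iff_left₀ (norm_nonneg _) (by positivity) two_ne_zero).1 ?_
  rw [norm_sub_sq_real, real_inner_smul_right, norm_smul, Real.norm_eq_abs, mul_pow, sq_abs,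
    mul_pow, div_pow, div_pow]
  rw [← sub_nonpos]
  field_simp
  nlinarith [mul_pos hA (hA.trans_le hAB)]

end LinearMap.IsSymmetric

theorem ContinuousLinearMap.norm_sub_adjoint_apply_le {E : Type*} [NormedAddCommGroup E]
    [InnerProductSpace ℝ E] [CompleteSpace E] (T : E →L[ℝ] E) (x : E) :
    ‖x - (T†) x‖ ≤ ‖1 - T‖ * ‖x‖ := by
  have h := ((1 - T)†).le_opNorm x
  rw [LinearIsometryEquiv.norm_map, map_sub, adjoint_one] at h
  simpa using h

section Frames

variable {H : Type*} [NormedAddCommGroup H] [InnerProductSpace ℝ H] {I : Type*}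

/-- A non-summable `tsum` is `0`, so for `0 < A` the lower bound forces the squares to be
summable. -/
def IsFrame (φ : I → H) (A B : ℝ) : Prop :=
  ∀ x : H, A * ‖x‖ ^ 2 ≤ ∑' i, ⟪x, φ i⟫ ^ 2 ∧ ∑' i, ⟪x, φ i⟫ ^ 2 ≤ B * ‖x‖ ^ 2

def AreWoven (φ ψ : I → H) : Prop :=
  ∃ C D : ℝ, 0 < C ∧ C ≤ D ∧ ∀ σ : Set I, IsFrame (fun i => if i ∈ σ then φ i else ψ i) C D

namespace IsFrame

variable {φ : I → H} {A B : ℝ}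

lemma summable_inner_sq (h : IsFrame φ A B) (hA : 0 < A) (x : H) :
    Summable fun i => ⟪x, φ i⟫ ^ 2 := by
  by_contra hns
  have hlow := (h x).1
  rw [tsum_eq_zero_of_not_summable hns] at hlow
  have hx : x = 0 := by
    have : ‖x‖ ^ 2 ≤ 0 := nonpos_of_mul_nonpos_right hlow hA
    simpa using this
  exact hns (by simp [hx])

lemma sqrt_mul_norm_le (h : IsFrame φ A B) (x : H) : √A * ‖x‖ ≤ √(∑' i, ⟪x, φ i⟫ ^ 2) := by
  simpa [Real.sqrt_mul' A (sq_nonneg ‖x‖)] using Real.sqrt_le_sqrt (h x).1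

lemma sqrt_tsum_le (h : IsFrame φ A B) (x : H) : √(∑' i, ⟪x, φ i⟫ ^ 2) ≤ √B * ‖x‖ := by
  simpa [Real.sqrt_mul' B (sq_nonneg ‖x‖)] using Real.sqrt_le_sqrt (h x).2

lemma norm_sum_smul_sq_le (h : IsFrame φ A B) (hA : 0 < A) (hB : 0 ≤ B) (t : Finset I)
    (c : I → ℝ) : ‖∑ i ∈ t, c i • φ i‖ ^ 2 ≤ B * ∑ i ∈ t, c i ^ 2 := by
  set w := ∑ i ∈ t, c i • φ i with hw
  have hcs : ‖w‖ * ‖w‖ ≤ √(∑ i ∈ t, c i ^ 2) * √B * ‖w‖ := calc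
    ‖w‖ * ‖w‖ = ∑ i ∈ t, c i * ⟪w, φ i⟫ := by
      rw [← real_inner_self_eq_norm_mul_norm]
      nth_rw 2 [hw]
      simp only [inner_sum, real_inner_smul_right]
    _ ≤ √(∑ i ∈ t, c i ^ 2) * √(∑ i ∈ t, ⟪w, φ i⟫ ^ 2) := Real.sum_mul_le_sqrt_mul_sqrt _ _ _
    _ ≤ √(∑ i ∈ t, c i ^ 2) * (√B * ‖w‖) := by
      gcongr
      exact (Real.sqrt_le_sqrt (Summable.sum_le_tsum t (fun i _ => sq_nonneg _)
        (h.summable_inner_sq hA w))).trans (h.sqrt_tsum_le w)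
    _ = √(∑ i ∈ t, c i ^ 2) * √B * ‖w‖ := by ring
  have hle : ‖w‖ ≤ √(∑ i ∈ t, c i ^ 2) * √B := by
    rcases (norm_nonneg w).eq_or_lt with h0 | hpos
    · rw [← h0]; positivity
    · exact le_of_mul_le_mul_right hcs hpos
  calc ‖w‖ ^ 2 ≤ (√(∑ i ∈ t, c i ^ 2) * √B) ^ 2 := pow_le_pow_left₀ (norm_nonneg _) hle 2
    _ = B * ∑ i ∈ t, c i ^ 2 := by
      rw [mul_pow, Real.sq_sqrt (Finset.sum_nonneg fun i _ => sq_nonneg _), Real.sq_sqrt hB,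
        mul_comm]

lemma summable_smul [CompleteSpace H] (h : IsFrame φ A B) (hA : 0 < A) (hB : 0 < B)
    {c : I → ℝ} (hc : Summable fun i => c i ^ 2) : Summable fun i => c i • φ i := by
  refine summable_iff_vanishing_norm.2 fun ε hε => ?_
  obtain ⟨s, hs⟩ := summable_iff_vanishing_norm.1 hc (ε ^ 2 / B) (by positivity)
  refine ⟨s, fun t ht => ?_⟩
  have htail := hs t ht
  rw [Real.norm_of_nonneg (Finset.sum_nonneg fun i _ => sq_nonneg _), lt_div_iff₀ hB] at htail
  refine (pow_lt_pow_iff_left₀ (norm_nonneg _) hε.le two_ne_zero).1 ?_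
  linarith [h.norm_sum_smul_sq_le hA hB.le t c]

variable {S : H →L[ℝ] H}

lemma hasSum_inner_mul_inner [CompleteSpace H] (h : IsFrame φ A B) (hA : 0 < A) (hB : 0 < B)
    (hS : ∀ x, S x = ∑' i, ⟪x, φ i⟫ • φ i) (x y : H) :
    HasSum (fun i => ⟪x, φ i⟫ * ⟪y, φ i⟫) ⟪S x, y⟫ := by
  have hsum := (h.summable_smul hA hB (h.summable_inner_sq hA x)).hasSum
  rw [← hS] at hsum
  simpa [real_inner_smul_left, real_inner_comm y] using hsum.mapL (innerSL ℝ y)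

lemma isSymmetric_frameOp [CompleteSpace H] (h : IsFrame φ A B) (hA : 0 < A) (hB : 0 < B)
    (hS : ∀ x, S x = ∑' i, ⟪x, φ i⟫ • φ i) : (S : H →ₗ[ℝ] H).IsSymmetric := fun x y => by
  show ⟪S x, y⟫ = ⟪x, S y⟫
  rw [real_inner_comm (S y)]
  exact (h.hasSum_inner_mul_inner hA hB hS x y).unique
    (by simpa only [mul_comm] using h.hasSum_inner_mul_inner hA hB hS y x)

lemma inner_frameOp_self [CompleteSpace H] (h : IsFrame φ A B) (hA : 0 < A) (hB : 0 < B)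
    (hS : ∀ x, S x = ∑' i, ⟪x, φ i⟫ • φ i) (x : H) : ⟪S x, x⟫ = ∑' i, ⟪x, φ i⟫ ^ 2 := by
  simpa [sq] using (h.hasSum_inner_mul_inner hA hB hS x x).tsum_eq.symm

lemma abs_sqrt_tsum_inner_ite_sub_le [CompleteSpace H] (h : IsFrame φ A B) (hA : 0 < A)
    (T : H →L[ℝ] H) (σ : Set I) (x : H) :
    |√(∑' i, ⟪x, if i ∈ σ then φ i else T (φ i)⟫ ^ 2) - √(∑' i, ⟪x, φ i⟫ ^ 2)| ≤
      √B * ‖1 - T‖ * ‖x‖ := by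
  set d : I → ℝ := fun i => if i ∈ σ then 0 else ⟪x - (T†) x, φ i⟫
  have hcoeff : ∀ i, ⟪x, if i ∈ σ then φ i else T (φ i)⟫ = ⟪x, φ i⟫ - d i := by
    intro i
    by_cases hi : i ∈ σ <;> simp [d, hi, inner_sub_left, ContinuousLinearMap.adjoint_inner_left]
  have hd_sq : ∀ i, d i ^ 2 ≤ ⟪x - (T†) x, φ i⟫ ^ 2 := by
    intro i
    by_cases hi : i ∈ σ <;> simp [d, hi, sq_nonneg]
  have hd_summable : Summable fun i => d i ^ 2 :=
    .of_nonneg_of_le (fun _ => sq_nonneg _) hd_sq (h.summable_inner_sq hA _)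
  simp only [hcoeff]
  refine (abs_sqrt_tsum_sq_sub_sub_le (h.summable_inner_sq hA x) hd_summable).trans ?_
  calc √(∑' i, d i ^ 2) ≤ √(∑' i, ⟪x - (T†) x, φ i⟫ ^ 2) :=
        Real.sqrt_le_sqrt (hd_summable.tsum_le_tsum hd_sq (h.summable_inner_sq hA _))
    _ ≤ √B * ‖x - (T†) x‖ := h.sqrt_tsum_le _
    _ ≤ √B * (‖1 - T‖ * ‖x‖) := by gcongr; exact T.norm_sub_adjoint_apply_le x
    _ = √B * ‖1 - T‖ * ‖x‖ := by ring

theorem areWoven_of_mul_norm_one_sub_sq_lt [CompleteSpace H] (h : IsFrame φ A B) (hA : 0 < A)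
    (hAB : A ≤ B) {T : H →L[ℝ] H} (hT : B * ‖1 - T‖ ^ 2 < A) : AreWoven φ fun i => T (φ i) := by
  set r := ‖1 - T‖
  have hr : 0 ≤ r := norm_nonneg _
  have hB : 0 ≤ B := hA.le.trans hAB
  have hrA : √B * r < √A := by
    rw [← Real.sqrt_sq hr, ← Real.sqrt_mul' B (sq_nonneg r)]
    exact Real.sqrt_lt_sqrt (mul_nonneg hB (sq_nonneg r)) hT
  have hBr : 0 ≤ √B * r := by positivity
  refine ⟨(√A - √B * r) ^ 2, B * (1 + r) ^ 2, pow_pos (sub_pos.2 hrA) 2, ?_, fun σ x => ?_⟩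
  · calc (√A - √B * r) ^ 2 ≤ √A ^ 2 := pow_le_pow_left₀ (by linarith) (by linarith) 2
      _ = A := Real.sq_sqrt hA.le
      _ ≤ B * (1 + r) ^ 2 := by nlinarith
  have hpert := abs_le.1 (h.abs_sqrt_tsum_inner_ite_sub_le hA T σ x)
  constructor
  · have hlow : (√A - √B * r) * ‖x‖ ≤
        √(∑' i, ⟪x, if i ∈ σ then φ i else T (φ i)⟫ ^ 2) := by
      linarith [h.sqrt_mul_norm_le x]
    calc (√A - √B * r) ^ 2 * ‖x‖ ^ 2 = ((√A - √B * r) * ‖x‖) ^ 2 := by ring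
      _ ≤ _ := (Real.le_sqrt (by nlinarith [norm_nonneg x])
        (tsum_nonneg fun _ => sq_nonneg _)).1 hlow
  · have hup : √(∑' i, ⟪x, if i ∈ σ then φ i else T (φ i)⟫ ^ 2) ≤ √B * (1 + r) * ‖x‖ := by
      linarith [h.sqrt_tsum_le x]
    calc _ ≤ (√B * (1 + r) * ‖x‖) ^ 2 := (Real.sqrt_le_left (by positivity)).1 hup
      _ = B * (1 + r) ^ 2 * ‖x‖ ^ 2 := by rw [mul_pow, mul_pow, Real.sq_sqrt hB]

end IsFrame

end Frames

theorem stmt_18_general {H : Type*} [NormedAddCommGroup H] [InnerProductSpace ℝ H]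
    [CompleteSpace H] {I : Type*} (φ : I → H) (A B : ℝ) (hA : 0 < A) (hAB : A ≤ B)
    (hφ : ∀ x : H,
      A * ‖x‖ ^ 2 ≤ (∑' i : I, ⟪x, φ i⟫ ^ 2) ∧ (∑' i : I, ⟪x, φ i⟫ ^ 2) ≤ B * ‖x‖ ^ 2)
    (S Sinv : H →L[ℝ] H)
    (hS : ∀ x : H, S x = ∑' i : I, ⟪x, φ i⟫ • φ i)
    (hS₁ : S.comp Sinv = ContinuousLinearMap.id ℝ H)
    (hcond : B / A < 2) :
    ∃ C D : ℝ, 0 < C ∧ C ≤ D ∧ ∀ σ : Set I, ∀ x : H,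
      C * ‖x‖ ^ 2 ≤
        (∑' i : I, ⟪x, if i ∈ σ then φ i else (2 * A * B / (A + B)) • Sinv (φ i)⟫ ^ 2) ∧
      (∑' i : I, ⟪x, if i ∈ σ then φ i else (2 * A * B / (A + B)) • Sinv (φ i)⟫ ^ 2) ≤
        D * ‖x‖ ^ 2 := by
  have hframe : IsFrame φ A B := hφ
  have hB : 0 < B := hA.trans_le hAB
  have hinv : Function.RightInverse Sinv S := fun x => congrArg (· x) hS₁
  have hnorm := (hframe.isSymmetric_frameOp hA hB hS).norm_one_sub_smul_le_of_rightInverse hinv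
    hA hAB (fun x => hframe.inner_frameOp_self hA hB hS x ▸ (hφ x).1)
    (fun x => hframe.inner_frameOp_self hA hB hS x ▸ (hφ x).2)
  have hBr : B * ((B - A) / (A + B)) ^ 2 < A := by
    rw [div_lt_iff₀ hA] at hcond
    rw [div_pow, mul_div_assoc', div_lt_iff₀ (by positivity)]
    nlinarith [mul_pos hA hA, mul_pos hA hB]
  exact hframe.areWoven_of_mul_norm_one_sub_sq_lt hA hAB
    (lt_of_le_of_lt (by gcongr) hBr)

/-- If `Φ` is a frame with bounds `A, B`, frame operator `S`, and condition number
`B/A < 2`, then `Φ` and the scaled canonical dual frame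
`{(2AB/(A+B)) S⁻¹ φ_i}` are woven. -/
theorem stmt_18 {H : Type*} [NormedAddCommGroup H] [InnerProductSpace ℝ H]
    [CompleteSpace H] {I : Type*} (φ : I → H) (A B : ℝ) (hA : 0 < A) (hAB : A ≤ B)
    (hφ : ∀ x : H,
      A * ‖x‖ ^ 2 ≤ (∑' i : I, ⟪x, φ i⟫ ^ 2) ∧ (∑' i : I, ⟪x, φ i⟫ ^ 2) ≤ B * ‖x‖ ^ 2)
    (S Sinv : H →L[ℝ] H)
    (hS : ∀ x : H, S x = ∑' i : I, ⟪x, φ i⟫ • φ i)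
    (hS₁ : S.comp Sinv = ContinuousLinearMap.id ℝ H)
    (hS₂ : Sinv.comp S = ContinuousLinearMap.id ℝ H)
    (hcond : B / A < 2) :
    ∃ C D : ℝ, 0 < C ∧ C ≤ D ∧ ∀ σ : Set I, ∀ x : H,
      C * ‖x‖ ^ 2 ≤
        (∑' i : I, ⟪x, if i ∈ σ then φ i else (2 * A * B / (A + B)) • Sinv (φ i)⟫ ^ 2) ∧
      (∑' i : I, ⟪x, if i ∈ σ then φ i else (2 * A * B / (A + B)) • Sinv (φ i)⟫ ^ 2) ≤
        D * ‖x‖ ^ 2 :=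
  stmt_18_general φ A B hA hAB hφ S Sinv hS hS₁ hcond
end

section
/- Let {e_k}_{k=1}^∞ be an orthonormal basis for H and {φ_ℓ}_{ℓ=1}^∞ a Riesz basis for H. Write the cross Gramian A = (⟨φ_ℓ, e_k⟩)_{k,ℓ} = D + R, where D is the diagonal part. If inf_k |D_{kk}| ≥ λ > 0 and ‖R‖ ≤ λ/2 (operator norm on ℓ²), then for every σ ⊆ ℕ, the family {e_k}_{k∈σ} ∪ {φ_ℓ}_{ℓ∈σ^c} is a Riesz sequence with lower Riesz bound min(1,λ²)/4; consequently {e_k} and {φ_ℓ} are woven. -/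
open scoped RealInnerProductSpace Classical

/-!
Conjugating `R` by the coordinate isometry `H ≃ ℓ²` of the basis `e` gives an operator `T` on `H`
with `φ ℓ = D ℓ • e ℓ + T (e ℓ)` and `‖T‖ ≤ λ / 2`. A weaving combination
`∑ c_i • (if i ∈ σ then e i else φ i)` is then `∑ γ_i • e i + T (∑_{i ∉ σ} c_i • e i)` with
`|γ_i| ≥ |c_i|` on `σ` and `|γ_i| ≥ λ |c_i|` off `σ`, and the perturbation costs at most
`λ / 2` times the norm of the `σᶜ`-part; this leaves the lower bound `min (1, λ²) / 4`.
Dually, `⟪x, φ i⟫ = D i * ⟪x, e i⟫ + ⟪T† x, e i⟫` with `∑ ⟪T† x, e i⟫² ≤ λ² / 4 * ‖x‖²`,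
which gives frame bounds for all weavings at once.
-/

lemma norm_sq_le_two_mul_norm_add_sq {E : Type*} [SeminormedAddCommGroup E] (g h : E) :
    ‖g‖ ^ 2 ≤ 2 * ‖g + h‖ ^ 2 + 2 * ‖h‖ ^ 2 := by
  have := norm_sub_le (g + h) h
  rw [add_sub_cancel_right] at this
  nlinarith [sq_nonneg (‖g + h‖ - ‖h‖), norm_nonneg g]

lemma ContinuousLinearMap.norm_apply_sq_le_of_opNorm_le {𝕜 E F : Type*}
    [NontriviallyNormedField 𝕜] [SeminormedAddCommGroup E] [SeminormedAddCommGroup F]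
    [NormedSpace 𝕜 E] [NormedSpace 𝕜 F] {T : E →L[𝕜] F} {C : ℝ} (hT : ‖T‖ ≤ C) (v : E) :
    ‖T v‖ ^ 2 ≤ C ^ 2 * ‖v‖ ^ 2 := by
  rw [← mul_pow]
  exact pow_le_pow_left₀ (norm_nonneg _) (T.le_of_opNorm_le hT v) 2

section

variable {ι : Type*} {σ : Set ι} {u r D w : ι → ℝ} {U ρ : ℝ}

lemma summable_sq_and_tsum_le_of_perturbation {B : ℝ} (hu : HasSum (fun i => u i ^ 2) U)
    (hr : HasSum (fun i => r i ^ 2) ρ) (hDB : ∀ i, D i ^ 2 ≤ B)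
    (hw : ∀ i, w i = if i ∈ σ then u i else D i * u i + r i) :
    Summable (fun i => w i ^ 2) ∧ ∑' i, w i ^ 2 ≤ (2 * B + 1) * U + 2 * ρ := by
  have hbound : ∀ i, w i ^ 2 ≤ (2 * B + 1) * u i ^ 2 + 2 * r i ^ 2 := by
    intro i
    have hB : 0 ≤ B := (sq_nonneg _).trans (hDB i)
    rw [hw]
    split_ifs
    · nlinarith [sq_nonneg (u i), sq_nonneg (r i)]
    · nlinarith [sq_nonneg (D i * u i - r i),
        mul_le_mul_of_nonneg_right (hDB i) (sq_nonneg (u i))]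
  have hmajorant := (hu.mul_left (2 * B + 1)).add (hr.mul_left 2)
  have hS : Summable (fun i => w i ^ 2) :=
    hmajorant.summable.of_nonneg_of_le (fun i => sq_nonneg _) hbound
  exact ⟨hS, hasSum_le hbound hS.hasSum hmajorant⟩

lemma le_tsum_sq_of_perturbation {lam : ℝ} (hu : HasSum (fun i => u i ^ 2) U)
    (hr : HasSum (fun i => r i ^ 2) ρ) (hρ : ρ ≤ lam ^ 2 / 4 * U)
    (hD : ∀ i, lam ^ 2 ≤ D i ^ 2) (hw : ∀ i, w i = if i ∈ σ then u i else D i * u i + r i)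
    (hS : Summable fun i => w i ^ 2) :
    min (1 / 2) (lam ^ 2 / 4) * U ≤ ∑' i, w i ^ 2 := by
  have hsplit (i : ι) :
      u i ^ 2 = (if i ∈ σ then u i ^ 2 else 0) + (if i ∈ σ then 0 else u i ^ 2) := by
    split_ifs <;> simp
  have hle (i : ι) : (if i ∈ σ then u i ^ 2 else 0) ≤ u i ^ 2 := by
    split_ifs <;> simp [sq_nonneg]
  have hle' (i : ι) : (if i ∈ σ then 0 else u i ^ 2) ≤ u i ^ 2 := by
    split_ifs <;> simp [sq_nonneg]
  obtain ⟨s, hs⟩ : Summable fun i => if i ∈ σ then u i ^ 2 else 0 :=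
    hu.summable.of_nonneg_of_le (fun i => by positivity) hle
  obtain ⟨t, ht⟩ : Summable fun i => if i ∈ σ then 0 else u i ^ 2 :=
    hu.summable.of_nonneg_of_le (fun i => by positivity) hle'
  have hU : s + t = U := (hs.add ht).unique (by simpa only [← hsplit] using hu)
  have hs_nonneg : 0 ≤ s := hasSum_le (fun i => by positivity) hasSum_zero hs
  have ht_nonneg : 0 ≤ t := hasSum_le (fun i => by positivity) hasSum_zero ht
  have hσ : s ≤ ∑' i, w i ^ 2 :=
    hasSum_le (fun i => by rw [hw]; split_ifs <;> simp [sq_nonneg]) hs hS.hasSum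
  have hσc : s + lam ^ 2 / 2 * t ≤ ∑' i, w i ^ 2 + ρ := by
    refine hasSum_le (fun i => ?_) (hs.add (ht.mul_left _)) (hS.hasSum.add hr)
    rw [hw]
    split_ifs
    · nlinarith [sq_nonneg (r i)]
    · nlinarith [sq_nonneg (D i * u i + 2 * r i),
        mul_le_mul_of_nonneg_right (hD i) (sq_nonneg (u i))]
  subst hU
  rcases le_total (lam ^ 2 / 4) (1 / 2) with hlam | hlam
  · rw [min_eq_right hlam]
    nlinarith
  · rw [min_eq_left hlam]
    nlinarith [mul_nonneg (sub_nonneg.mpr hlam) (sub_nonneg.mpr hσ)]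

end

section

variable {ι H : Type*} [NormedAddCommGroup H] [InnerProductSpace ℝ H]

lemma Orthonormal.norm_sum_smul_sq {e : ι → H} (he : Orthonormal ℝ e) (s : Finset ι)
    (c : ι → ℝ) : ‖∑ i ∈ s, c i • e i‖ ^ 2 = ∑ i ∈ s, c i ^ 2 := by
  rw [← real_inner_self_eq_norm_sq, he.inner_sum c c s]
  simp only [conj_trivial, sq]

lemma HilbertBasis.hasSum_inner_sq (b : HilbertBasis ι ℝ H) (x : H) :
    HasSum (fun i => ⟪x, b i⟫ ^ 2) (‖x‖ ^ 2) := by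
  simpa only [real_inner_comm x, ← sq, real_inner_self_eq_norm_sq]
    using b.hasSum_inner_mul_inner x x

theorem lower_riesz_bound_weaving {e φ : ι → H} (he : Orthonormal ℝ e) {T : H →L[ℝ] H}
    {D : ι → ℝ} {lam : ℝ} (hφ : ∀ i, φ i = D i • e i + T (e i)) (hD : ∀ i, lam ≤ |D i|)
    (hT : ‖T‖ ≤ lam / 2) (σ : Set ι) (s : Finset ι) (c : ι → ℝ) :
    min 1 (lam ^ 2) / 4 * ∑ i ∈ s, c i ^ 2 ≤
      ‖∑ i ∈ s, c i • (if i ∈ σ then e i else φ i)‖ ^ 2 := by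
  have hlam : 0 ≤ lam := by linarith [norm_nonneg T]
  set γ : ι → ℝ := fun i => if i ∈ σ then c i else c i * D i
  set β : ι → ℝ := fun i => if i ∈ σ then 0 else c i
  have hsplit : ∑ i ∈ s, c i • (if i ∈ σ then e i else φ i) =
      ∑ i ∈ s, γ i • e i + T (∑ i ∈ s, β i • e i) := by
    simp only [map_sum, map_smul, ← Finset.sum_add_distrib]
    refine Finset.sum_congr rfl fun i _ => ?_
    by_cases hi : i ∈ σ
    · simp [γ, β, hi]
    · simp [γ, β, hi, hφ i, mul_smul]
  have hγ := norm_sq_le_two_mul_norm_add_sq (∑ i ∈ s, γ i • e i) (T (∑ i ∈ s, β i • e i))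
  have hβ := T.norm_apply_sq_le_of_opNorm_le hT (∑ i ∈ s, β i • e i)
  rw [← hsplit, he.norm_sum_smul_sq] at hγ
  rw [he.norm_sum_smul_sq] at hβ
  have hpointwise : ∀ i ∈ s,
      min 1 (lam ^ 2) / 4 * c i ^ 2 ≤ γ i ^ 2 / 2 - lam ^ 2 / 4 * β i ^ 2 := by
    intro i _
    have hm₁ := min_le_left 1 (lam ^ 2)
    have hm₂ := min_le_right 1 (lam ^ 2)
    by_cases hi : i ∈ σ
    · simp only [γ, β, hi, if_true]
      nlinarith [sq_nonneg (c i)]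
    · simp only [γ, β, hi, if_false]
      nlinarith [sq_nonneg (c i), sq_le_sq.mpr ((abs_of_nonneg hlam).trans_le (hD i))]
  calc min 1 (lam ^ 2) / 4 * ∑ i ∈ s, c i ^ 2
      ≤ ∑ i ∈ s, (γ i ^ 2 / 2 - lam ^ 2 / 4 * β i ^ 2) := by
        rw [Finset.mul_sum]; exact Finset.sum_le_sum hpointwise
    _ ≤ _ := by
        rw [Finset.sum_sub_distrib, ← Finset.sum_div, ← Finset.mul_sum]
        linarith

theorem HilbertBasis.exists_diag_add_offDiag [DecidableEq ι] (b : HilbertBasis ι ℝ H)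
    (φ : ι → H)    (R : lp (fun _ : ι => ℝ) 2 →L[ℝ] lp (fun _ : ι => ℝ) 2)
    (hR : ∀ i k, R (lp.single 2 i 1) k = if k = i then 0 else ⟪φ i, b k⟫) :
    ∃ T : H →L[ℝ] H, ‖T‖ = ‖R‖ ∧ ∀ i, φ i = ⟪φ i, b i⟫ • b i + T (b i) := by
  refine ⟨(b.repr.symm : lp (fun _ : ι => ℝ) 2 →L[ℝ] H).comp
    (R.comp (b.repr : H →L[ℝ] lp (fun _ : ι => ℝ) 2)), ?_, fun i => ?_⟩
  · rw [ContinuousLinearMap.opNorm_linearIsometryEquiv_comp,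
      ContinuousLinearMap.opNorm_comp_linearIsometryEquiv]
  suffices R (lp.single 2 i 1) = b.repr (φ i - ⟪φ i, b i⟫ • b i) by
    simp [b.repr_self, this]
  ext k
  rw [hR, b.repr_apply_apply, inner_sub_right, inner_smul_right, real_inner_comm (φ i),
    orthonormal_iff_ite.mp b.orthonormal]
  by_cases hk : k = i <;> simp [hk]

lemma inner_eq_mul_inner_add_inner_adjoint [CompleteSpace H] {e φ : ι → H} {T : H →L[ℝ] H}
    {D : ι → ℝ} (hφ : ∀ i, φ i = D i • e i + T (e i)) (x : H) (i : ι) :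
    ⟪x, φ i⟫ = D i * ⟪x, e i⟫ + ⟪T.adjoint x, e i⟫ := by
  rw [hφ, inner_add_right, real_inner_smul_right, ContinuousLinearMap.adjoint_inner_left]

theorem frame_bounds_weaving [CompleteSpace H] (b : HilbertBasis ι ℝ H) {φ : ι → H}
    {T : H →L[ℝ] H} {D : ι → ℝ} {lam B : ℝ} (hφ : ∀ i, φ i = D i • b i + T (b i))
    (hD : ∀ i, lam ≤ |D i|) (hDB : ∀ i, D i ^ 2 ≤ B) (hT : ‖T‖ ≤ lam / 2) (σ : Set ι) (x : H) :
    min (1 / 2) (lam ^ 2 / 4) * ‖x‖ ^ 2 ≤ ∑' i, ⟪x, if i ∈ σ then b i else φ i⟫ ^ 2 ∧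
      ∑' i, ⟪x, if i ∈ σ then b i else φ i⟫ ^ 2 ≤ (2 * B + 1 + lam ^ 2 / 2) * ‖x‖ ^ 2 := by
  have hlam : 0 ≤ lam := by linarith [norm_nonneg T]
  have hadj : ‖T.adjoint x‖ ^ 2 ≤ lam ^ 2 / 4 * ‖x‖ ^ 2 := by
    have := T.adjoint.norm_apply_sq_le_of_opNorm_le
      ((ContinuousLinearMap.adjoint.norm_map T).trans_le hT) x
    linarith
  have hw (i : ι) : ⟪x, if i ∈ σ then b i else φ i⟫ =
      if i ∈ σ then ⟪x, b i⟫ else D i * ⟪x, b i⟫ + ⟪T.adjoint x, b i⟫ := by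
    split_ifs
    · rfl
    · exact inner_eq_mul_inner_add_inner_adjoint hφ x i
  have hD_sq (i : ι) : lam ^ 2 ≤ D i ^ 2 :=
    sq_le_sq.mpr ((abs_of_nonneg hlam).trans_le (hD i))
  obtain ⟨hS, hupper⟩ := summable_sq_and_tsum_le_of_perturbation (b.hasSum_inner_sq x)
    (b.hasSum_inner_sq (T.adjoint x)) hDB hw
  exact ⟨le_tsum_sq_of_perturbation (b.hasSum_inner_sq x) (b.hasSum_inner_sq (T.adjoint x))
    hadj hD_sq hw hS, by linarith⟩

end

theorem stmt_19_general {H : Type*} [NormedAddCommGroup H] [InnerProductSpace ℝ H]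
    [CompleteSpace H] (e φ : ℕ → H)
    (he : Orthonormal ℝ e)
    (hedense : Dense (Submodule.span ℝ (Set.range e) : Set H))
    (hφ : ∃ A B : ℝ, 0 < A ∧ A ≤ B ∧ ∀ c : ℕ →₀ ℝ,
      A * (∑ i ∈ c.support, (c i) ^ 2) ≤ ‖∑ i ∈ c.support, c i • φ i‖ ^ 2 ∧
      ‖∑ i ∈ c.support, c i • φ i‖ ^ 2 ≤ B * (∑ i ∈ c.support, (c i) ^ 2))
    (lam : ℝ) (hlam : 0 < lam)
    (hdiag : ∀ k : ℕ, lam ≤ |⟪φ k, e k⟫|)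
    (R : lp (fun _ : ℕ => ℝ) 2 →L[ℝ] lp (fun _ : ℕ => ℝ) 2)
    (hR : ∀ (a : lp (fun _ : ℕ => ℝ) 2) (k : ℕ),
      R a k = ∑' ℓ : ℕ, (if k = ℓ then 0 else ⟪φ ℓ, e k⟫) * a ℓ)
    (hRnorm : ‖R‖ ≤ lam / 2) :
    (∀ σ : Set ℕ, ∀ c : ℕ →₀ ℝ,
      min 1 (lam ^ 2) / 4 * (∑ i ∈ c.support, (c i) ^ 2) ≤
        ‖∑ i ∈ c.support, c i • (if i ∈ σ then e i else φ i)‖ ^ 2) ∧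
    (∃ A B : ℝ, 0 < A ∧ A ≤ B ∧ ∀ σ : Set ℕ, ∀ x : H,
      A * ‖x‖ ^ 2 ≤ (∑' i : ℕ, ⟪x, if i ∈ σ then e i else φ i⟫ ^ 2) ∧
      (∑' i : ℕ, ⟪x, if i ∈ σ then e i else φ i⟫ ^ 2) ≤ B * ‖x‖ ^ 2) := by
  obtain ⟨_, B, -, -, hφB⟩ := hφ
  obtain ⟨b, rfl⟩ : ∃ b : HilbertBasis ℕ ℝ H, ⇑b = e :=
    ⟨_, HilbertBasis.coe_mk he (Submodule.dense_iff_topologicalClosure_eq_top.mp hedense).ge⟩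
  obtain ⟨T, hTR, hφT⟩ := b.exists_diag_add_offDiag φ R fun i k => by
    rw [hR, tsum_eq_single i fun ℓ hℓ => by rw [lp.single_apply_ne 2 i _ hℓ, mul_zero],
      lp.single_apply_self, mul_one]
  have hT : ‖T‖ ≤ lam / 2 := hTR.trans_le hRnorm
  have hDB (i : ℕ) : ⟪φ i, b i⟫ ^ 2 ≤ B := by
    have hφi : ‖φ i‖ ^ 2 ≤ B := by simpa using (hφB (Finsupp.single i 1)).2
    have hinner := abs_real_inner_le_norm (φ i) (b i)
    rw [he.norm_eq_one, mul_one] at hinner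
    exact (sq_le_sq.mpr (hinner.trans_eq (abs_norm _).symm)).trans hφi
  refine ⟨fun σ c => lower_riesz_bound_weaving he hφT hdiag hT σ c.support c,
    min (1 / 2) (lam ^ 2 / 4), 2 * B + 1 + lam ^ 2 / 2, by positivity, ?_, fun σ x => ?_⟩
  · have := min_le_left (1 / 2 : ℝ) (lam ^ 2 / 4)
    nlinarith [(sq_nonneg _).trans (hDB 0)]
  · exact frame_bounds_weaving b hφT hdiag hDB hT σ x

/-- Diagonal dominance of the cross Gramian: if `{e_k}` is an orthonormal basis,
`{φ_ℓ}` is a Riesz basis, the diagonal entries of the cross Gramian satisfy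
`|⟪φ_k, e_k⟫| ≥ λ > 0` and the off-diagonal part `R` has operator norm
`‖R‖ ≤ λ/2` on `ℓ²`, then every weaving `{e_k}_{k∈σ} ∪ {φ_ℓ}_{ℓ∈σᶜ}` is a Riesz
sequence with lower Riesz bound `min(1, λ²)/4`; consequently `{e_k}` and `{φ_ℓ}`
are woven. -/
theorem stmt_19 {H : Type*} [NormedAddCommGroup H] [InnerProductSpace ℝ H]
    [CompleteSpace H] (e φ : ℕ → H)
    (he : Orthonormal ℝ e)
    (hedense : Dense (Submodule.span ℝ (Set.range e) : Set H))
    (hφ : ∃ A B : ℝ, 0 < A ∧ A ≤ B ∧ ∀ c : ℕ →₀ ℝ,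
      A * (∑ i ∈ c.support, (c i) ^ 2) ≤ ‖∑ i ∈ c.support, c i • φ i‖ ^ 2 ∧
      ‖∑ i ∈ c.support, c i • φ i‖ ^ 2 ≤ B * (∑ i ∈ c.support, (c i) ^ 2))
    (hφdense : Dense (Submodule.span ℝ (Set.range φ) : Set H))
    (lam : ℝ) (hlam : 0 < lam)
    (hdiag : ∀ k : ℕ, lam ≤ |⟪φ k, e k⟫|)
    (R : lp (fun _ : ℕ => ℝ) 2 →L[ℝ] lp (fun _ : ℕ => ℝ) 2)
    (hR : ∀ (a : lp (fun _ : ℕ => ℝ) 2) (k : ℕ),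
      R a k = ∑' ℓ : ℕ, (if k = ℓ then 0 else ⟪φ ℓ, e k⟫) * a ℓ)
    (hRnorm : ‖R‖ ≤ lam / 2) :
    (∀ σ : Set ℕ, ∀ c : ℕ →₀ ℝ,
      min 1 (lam ^ 2) / 4 * (∑ i ∈ c.support, (c i) ^ 2) ≤
        ‖∑ i ∈ c.support, c i • (if i ∈ σ then e i else φ i)‖ ^ 2) ∧
    (∃ A B : ℝ, 0 < A ∧ A ≤ B ∧ ∀ σ : Set ℕ, ∀ x : H,
      A * ‖x‖ ^ 2 ≤ (∑' i : ℕ, ⟪x, if i ∈ σ then e i else φ i⟫ ^ 2) ∧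
      (∑' i : ℕ, ⟪x, if i ∈ σ then e i else φ i⟫ ^ 2) ≤ B * ‖x‖ ^ 2) :=
  stmt_19_general e φ he hedense hφ lam hlam hdiag R hR hRnorm
end
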